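/- arXiv:2405.03367 — 2 statements merged into one kernel-verified Lean document; each statement's English description precedes it below -/
import Mathlib

section
/- Let N be a set of ground closures with candidate interpretation R_*. Let (D·θ) = (D' ∨ t ≈ t' · θ) and (C·θ) be closures in N. If (D·θ) produces the rule tθ → t'θ of R_*, tθ occurs in Cθ at the top of the strictly maximal side of a positive maximal literal, and R_* ⊭ (C·θ), then (D·θ) ≪_{R_*} (C·θ). -/
/- Common infrastructure: first-order terms, clauses, ground rewrite systems,
   reduction orderings, the (Horn and non-Horn) R-normalization closure orderings,
   the Ground Closure (Horn) Superposition Calculus and its redundancy criterion,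
   and the candidate interpretation construction, following Waldmann,
   "On the (In-)Completeness of Destructive Equality Resolution in the
   Superposition Calculus". -/

set_option autoImplicit false
set_option maxHeartbeats 1000000

noncomputable section

/-- First-order terms over function symbols `F` and variables `V`. -/
inductive Trm (F V : Type) : Type
  | var : V → Trm F V
  | app : F → List (Trm F V) → Trm F V

namespace Trm
variable {F V : Type}

instance : DecidableEq (Trm F V) := Classical.decEq _

/-- Application of a substitution to a term. -/
def subst (θ : V → Trm F V) : Trm F V → Trm F V
  | var x => θ x
  | app f ts => app f (ts.attach.map fun t => subst θ t.1)
decreasing_by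
  have := List.sizeOf_lt_of_mem t.2
  simp only [Trm.app.sizeOf_spec]
  omega

/-- A term is ground if it contains no variables. -/
inductive IsGround : Trm F V → Prop
  | app {f : F} {ts : List (Trm F V)} : (∀ t ∈ ts, IsGround t) → IsGround (app f ts)

/-- The set of all subterms of a term (including the term itself). -/
def subterms : Trm F V → Finset (Trm F V)
  | var x => {var x}
  | app f ts => insert (app f ts) ((ts.attach.map fun t => subterms t.1).foldr (· ∪ ·) ∅)
decreasing_by
  have := List.sizeOf_lt_of_mem t.2
  simp only [Trm.app.sizeOf_spec]
  omega

/-- The set of proper subterms of a term (subterms at positions `> ε`). -/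
def psubterms : Trm F V → Finset (Trm F V)
  | var _ => ∅
  | app _ ts => (ts.map fun t => subterms t).foldr (· ∪ ·) ∅

end Trm

/-- Contexts: terms with exactly one hole. -/
inductive Ctx (F V : Type) : Type
  | hole : Ctx F V
  | app : F → List (Trm F V) → Ctx F V → List (Trm F V) → Ctx F V

/-- Filling the hole of a context with a term. -/
def Ctx.fill {F V : Type} : Ctx F V → Trm F V → Trm F V
  | .hole, t => t
  | .app f l c r, t => Trm.app f (l ++ c.fill t :: r)

variable {F V : Type}

/-- `RewAt R s t u root` holds iff `s` rewrites to `t` in one step using a rule of `R`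
whose left-hand side is `u`, and `root = true` iff the rewrite position is `ε`. -/
inductive RewAt (R : Set (Trm F V × Trm F V)) : Trm F V → Trm F V → Trm F V → Bool → Prop
  | root {u v : Trm F V} : (u, v) ∈ R → RewAt R u v u true
  | congr {t t' u : Trm F V} {b : Bool} {f : F} {l r : List (Trm F V)} :
      RewAt R t t' u b → RewAt R (.app f (l ++ t :: r)) (.app f (l ++ t' :: r)) u false

/-- One-step rewrite relation `s →_R t`. -/
def Step (R : Set (Trm F V × Trm F V)) (s t : Trm F V) : Prop := ∃ u b, RewAt R s t u b

/-- `t` is irreducible w.r.t. `R`. -/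
def Irred (R : Set (Trm F V × Trm F V)) (t : Trm F V) : Prop := ∀ t', ¬ Step R t t'

/-- `R` is left-reduced: the left-hand side of each rule is irreducible by the other rules. -/
def LeftReduced (R : Set (Trm F V × Trm F V)) : Prop := ∀ p ∈ R, Irred (R \ {p}) p.1

/-- A reduction ordering that is total on ground terms. -/
structure ReductionOrdering (F V : Type) where
  gt : Trm F V → Trm F V → Prop
  trans : ∀ {a b c : Trm F V}, gt a b → gt b c → gt a c
  wf : WellFounded fun a b : Trm F V => gt b a
  compat_ctx : ∀ {s t : Trm F V} (f : F) (l r : List (Trm F V)),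
      gt s t → gt (.app f (l ++ s :: r)) (.app f (l ++ t :: r))
  compat_subst : ∀ {s t : Trm F V} (θ : V → Trm F V), gt s t → gt (s.subst θ) (t.subst θ)
  total_ground : ∀ {s t : Trm F V}, s.IsGround → t.IsGround → s ≠ t → gt s t ∨ gt t s

/-- A left-reduced ground rewrite system contained in the reduction ordering `O`. -/
def GoodRS (O : ReductionOrdering F V) (R : Set (Trm F V × Trm F V)) : Prop :=
  LeftReduced R ∧ ∀ p ∈ R, p.1.IsGround ∧ p.2.IsGround ∧ O.gt p.1 p.2

/-- Reflexive-transitive rewriting to an `R`-normal form. -/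
def ReachNF (R : Set (Trm F V × Trm F V)) (t t' : Trm F V) : Prop :=
  Relation.ReflTransGen (Step R) t t' ∧ Irred R t'

open Classical in
/-- The `R`-normal form `t↓_R` of `t` (via choice; unique for terminating confluent `R`). -/
def nf (R : Set (Trm F V × Trm F V)) (t : Trm F V) : Trm F V :=
  if h : ∃ t', ReachNF R t t' then h.choose else t

/-- The graph of the labeled `R`-redex multiset function `rm_R(t,m)` of Definition 1:
`RM R t m S` holds iff `S` is a possible result of collecting the labeled redexes and
recursing along some `R`-normalization of `t`. -/
inductive RM (R : Set (Trm F V × Trm F V)) : Trm F V → ℕ → Multiset (Trm F V × ℕ) → Prop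
  | irred {t : Trm F V} {m : ℕ} : Irred R t → RM R t m 0
  | step_top {t t' u : Trm F V} {b : Bool} {m : ℕ} {S : Multiset (Trm F V × ℕ)} :
      RewAt R t t' u b → (b = true ∨ 0 < m) → RM R t' m S → RM R t m ((u, m) ::ₘ S)
  | step_deep {t t' u : Trm F V} {S : Multiset (Trm F V × ℕ)} :
      RewAt R t t' u false → RM R t' 0 S → RM R t 0 ((u, 1) ::ₘ S)

open Classical in
/-- The labeled `R`-redex multiset `rm_R(t,m)` (via choice; unique under the
hypotheses of Lemma 1). -/
def rm (R : Set (Trm F V × Trm F V)) (t : Trm F V) (m : ℕ) : Multiset (Trm F V × ℕ) :=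
  if h : ∃ S, RM R t m S then h.choose else 0

/-- Equational literals. -/
inductive Lit (F V : Type) : Type
  | pos : Trm F V → Trm F V → Lit F V
  | neg : Trm F V → Trm F V → Lit F V

instance : DecidableEq (Lit F V) := Classical.decEq _

def Lit.subst (θ : V → Trm F V) : Lit F V → Lit F V
  | .pos s t => .pos (s.subst θ) (t.subst θ)
  | .neg s t => .neg (s.subst θ) (t.subst θ)

def Lit.IsGround : Lit F V → Prop
  | .pos s t => s.IsGround ∧ t.IsGround
  | .neg s t => s.IsGround ∧ t.IsGround

def Lit.posQ : Lit F V → Bool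
  | .pos _ _ => true
  | .neg _ _ => false

/-- A clause is a finite multiset of literals; `⊥` is the empty clause `0`. -/
abbrev Clause (F V : Type) := Multiset (Lit F V)

def Clause.subst (θ : V → Trm F V) (C : Clause F V) : Clause F V := C.map (Lit.subst θ)

def Clause.IsGround (C : Clause F V) : Prop := ∀ L ∈ C, L.IsGround

/-- Horn clause: at most one positive literal. -/
def IsHorn (C : Clause F V) : Prop := Multiset.card (C.filter fun L => L.posQ = true) ≤ 1

/-- The (Dershowitz-Manna) multiset extension of a relation, `M` greater than `N`. -/
def MultGT {α : Type} (r : α → α → Prop) (M N : Multiset α) : Prop :=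
  ∃ X Y Z, M = Z + X ∧ N = Z + Y ∧ X ≠ 0 ∧ ∀ y ∈ Y, ∃ x ∈ X, r x y

/-- The multiset associated to a literal for the literal ordering. -/
def Lit.mset : Lit F V → Multiset (Trm F V)
  | .pos s t => {s, t}
  | .neg s t => {s, s, t, t}

/-- The literal ordering `≻_L`. -/
def litGT (O : ReductionOrdering F V) (L L' : Lit F V) : Prop := MultGT O.gt L.mset L'.mset

/-- The clause ordering `≻_C`. -/
def clauseGT (O : ReductionOrdering F V) (C D : Clause F V) : Prop := MultGT (litGT O) C D

/-- `L` is maximal w.r.t. the rest clause `D`. -/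
def MaxIn (O : ReductionOrdering F V) (L : Lit F V) (D : Clause F V) : Prop :=
  ∀ L' ∈ D, ¬ litGT O L' L

/-- `L` is strictly maximal w.r.t. the rest clause `D`. -/
def SMaxIn (O : ReductionOrdering F V) (L : Lit F V) (D : Clause F V) : Prop :=
  ∀ L' ∈ D, ¬ litGT O L' L ∧ L' ≠ L

section TermSets

def Lit.negSubs : Lit F V → Finset (Trm F V)
  | .neg s t => s.subterms ∪ t.subterms
  | .pos _ _ => ∅

def Lit.posPSubs : Lit F V → Finset (Trm F V)
  | .pos s t => s.psubterms ∪ t.psubterms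
  | .neg _ _ => ∅

def Lit.posSubs : Lit F V → Finset (Trm F V)
  | .pos s t => s.subterms ∪ t.subterms
  | .neg _ _ => ∅

def Lit.negTops : Lit F V → Finset (Trm F V)
  | .neg s t => {s, t}
  | .pos _ _ => ∅

def Lit.posTops : Lit F V → Finset (Trm F V)
  | .pos s t => {s, t}
  | .neg _ _ => ∅

def Lit.allSubs : Lit F V → Finset (Trm F V)
  | .pos s t => s.subterms ∪ t.subterms
  | .neg s t => s.subterms ∪ t.subterms

/-- `ss⁻(C)`: subterms of sides of negative literals. -/
def ssN (C : Clause F V) : Finset (Trm F V) := C.toFinset.sup Lit.negSubs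
/-- `ss⁺_{>ε}(C)`: proper subterms of sides of positive literals. -/
def ssPp (C : Clause F V) : Finset (Trm F V) := C.toFinset.sup Lit.posPSubs
/-- All subterms of sides of positive literals. -/
def ssP (C : Clause F V) : Finset (Trm F V) := C.toFinset.sup Lit.posSubs
/-- `ts⁻(C)`: sides of negative literals. -/
def tsN (C : Clause F V) : Finset (Trm F V) := C.toFinset.sup Lit.negTops
/-- `ts⁺(C)`: sides of positive literals. -/
def tsP (C : Clause F V) : Finset (Trm F V) := C.toFinset.sup Lit.posTops
/-- All subterms occurring in `C`. -/
def allSub (C : Clause F V) : Finset (Trm F V) := C.toFinset.sup Lit.allSubs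

/-- The labeled subterm set `lss(C)` of Definition 1. -/
def lss (C : Clause F V) : Finset (Trm F V × ℕ) :=
  (ssN C).image (fun t => (t, 2)) ∪ ((ssPp C \ ssN C).image fun t => (t, 1)) ∪
    ((tsP C \ (ssPp C ∪ ssN C)).image fun t => (t, 0))

/-- The labeled topterm set `lts(C)` of Definition 1. -/
def lts (C : Clause F V) : Finset (Trm F V × ℕ) :=
  (tsN C).image (fun t => (t, 2)) ∪ ((tsP C \ tsN C).image fun t => (t, 0))

end TermSets

/-- Contribution of one labeled subterm of `C` to `nm_R(C·θ)`. -/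
def nmElt (R : Set (Trm F V × Trm F V)) (θ : V → Trm F V) : Trm F V × ℕ → Multiset (Trm F V × ℕ)
  | (.var x, m) => rm R (θ x) m
  | (.app f ts, m) => rm R (.app f (ts.map fun t => nf R (t.subst θ))) m

/-- The `R`-normalization multiset `nm_R(C·θ)` of Definition 2 (Horn case). -/
def nm (R : Set (Trm F V × Trm F V)) (C : Clause F V) (θ : V → Trm F V) :
    Multiset (Trm F V × ℕ) :=
  (lss C).sum (nmElt R θ) + (lts C).sum fun p => {(nf R (p.1.subst θ), p.2)}

/-- A closure `(C·θ)`. -/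
abbrev Closure (F V : Type) := Clause F V × (V → Trm F V)

/-- The ground instance `Cθ` represented by a closure `(C·θ)`. -/
def Closure.inst (c : Closure F V) : Clause F V := Clause.subst c.2 c.1

def Closure.IsGround (c : Closure F V) : Prop := Clause.IsGround c.inst

/-- Equality of clauses up to bijective variable renaming. -/
def ClauseAlphaEq (C D : Clause F V) : Prop :=
  ∃ ρ : V ≃ V, Clause.subst (fun x => Trm.var (ρ x)) C = D

/-- Identification of closures: equal up to bijective renaming (with the same
ground instance). -/
def CloAlphaEq (c d : Closure F V) : Prop := ClauseAlphaEq c.1 d.1 ∧ c.inst = d.inst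

/-- The tie-breaking closure ordering `≻_Clo`: an arbitrary well-founded ordering on
ground closures, total on closures with the same ground instance, such that
`(C·θ₁) ≻_Clo (D·θ₂)` whenever `Cθ₁ = Dθ₂` and `D` is an instance of `C` but not
vice versa. -/
structure TieBreak (F V : Type) where
  gt : Closure F V → Closure F V → Prop
  wf : WellFounded fun a b : Closure F V => gt b a
  total : ∀ c d : Closure F V, c.inst = d.inst → CloAlphaEq c d ∨ gt c d ∨ gt d c
  inst_gt : ∀ c d : Closure F V, c.inst = d.inst →
      (∃ σ, Clause.subst σ c.1 = d.1) → (¬ ∃ σ, Clause.subst σ d.1 = c.1) → gt c d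

/-- Lexicographic combination of `≻` and `>` on labeled terms. -/
def lexGT (O : ReductionOrdering F V) (p q : Trm F V × ℕ) : Prop :=
  O.gt p.1 q.1 ∨ (p.1 = q.1 ∧ q.2 < p.2)

/-- The `R`-normalization closure ordering `≫_R` of Definition 2 (Horn case). -/
def cloGT (O : ReductionOrdering F V) (T : TieBreak F V) (R : Set (Trm F V × Trm F V))
    (c d : Closure F V) : Prop :=
  MultGT (lexGT O) (nm R c.1 c.2) (nm R d.1 d.2)
  ∨ (nm R c.1 c.2 = nm R d.1 d.2 ∧ clauseGT O c.inst d.inst)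
  ∨ (nm R c.1 c.2 = nm R d.1 d.2 ∧ c.inst = d.inst ∧ T.gt c d)

/-- Convertibility w.r.t. a set of ground equations: the congruence generated by `E`. -/
inductive Conv (E : Set (Trm F V × Trm F V)) : Trm F V → Trm F V → Prop
  | rel {s t : Trm F V} : (s, t) ∈ E → Conv E s t
  | refl (t : Trm F V) : Conv E t t
  | symm {s t : Trm F V} : Conv E s t → Conv E t s
  | trans {s t u : Trm F V} : Conv E s t → Conv E t u → Conv E s u
  | congr {t t' : Trm F V} {f : F} {l r : List (Trm F V)} :
      Conv E t t' → Conv E (.app f (l ++ t :: r)) (.app f (l ++ t' :: r))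

/-- Truth of a literal in the equality Herbrand interpretation generated by `E`. -/
def litTrue (E : Set (Trm F V × Trm F V)) : Lit F V → Prop
  | .pos s t => Conv E s t
  | .neg s t => ¬ Conv E s t

/-- Truth of a (ground) clause in the equality Herbrand interpretation generated by `E`. -/
def ModelsC (E : Set (Trm F V × Trm F V)) (D : Clause F V) : Prop := ∃ L ∈ D, litTrue E L

/-- `R ⊨ (C·θ)`. -/
def Models (E : Set (Trm F V × Trm F V)) (c : Closure F V) : Prop := ModelsC E c.inst

/-- `σ` is an idempotent most general unifier of `s` and `s'`. -/
def IsMGU (σ : V → Trm F V) (s s' : Trm F V) : Prop :=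
  s.subst σ = s'.subst σ ∧
  ∀ τ : V → Trm F V, s.subst τ = s'.subst τ → ∀ x, (σ x).subst τ = τ x

/-- Replacement of all occurrences of `u` by `v` in a term. -/
def replAll (u v : Trm F V) : Trm F V → Trm F V
  | .var x => if Trm.var x = u then v else .var x
  | .app f ts => if Trm.app f ts = u then v else .app f (ts.attach.map fun s => replAll u v s.1)
decreasing_by
  have := List.sizeOf_lt_of_mem s.2
  simp only [Trm.app.sizeOf_spec]
  omega

/-- Replacement of all occurrences of `u` by `v` in a clause. -/
def Clause.replAll (u v : Trm F V) (C : Clause F V) : Clause F V :=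
  C.map fun L => match L with
    | .pos s t => .pos (_root_.replAll u v s) (_root_.replAll u v t)
    | .neg s t => .neg (_root_.replAll u v s) (_root_.replAll u v t)

instance : DecidableEq V := Classical.decEq _

/-- Single-point substitution `{x ↦ t}`. -/
def single (x : V) (t : Trm F V) : V → Trm F V := fun y => if y = x then t else Trm.var y

/-- Ground inferences of the Ground Closure (Horn) Superposition Calculus.
`eqres` is Equality Resolution, `ps1` is Parallel Superposition I (overlap at a
non-variable position `u`), `ps2` is Parallel Superposition II (overlap at or below
a variable `x`, with `xθ = u[tθ]` for a context `u`). -/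
inductive GInf (F V : Type) : Type
  | eqres (C' : Clause F V) (s s' : Trm F V) (σ θ : V → Trm F V)
  | ps1 (D' : Clause F V) (t t' : Trm F V) (C : Clause F V) (u : Trm F V) (σ θ : V → Trm F V)
  | ps2 (D' : Clause F V) (t t' : Trm F V) (C : Clause F V) (x : V) (u : Ctx F V) (θ : V → Trm F V)

namespace GInf

/-- The conclusion of a ground inference. -/
def concl : GInf F V → Closure F V
  | .eqres C' _ _ σ θ => (Clause.subst σ C', θ)
  | .ps1 D' _ t' C u σ θ => (Clause.subst σ (D' + Clause.replAll u t' C), θ)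
  | .ps2 D' _ t' C x u θ => (D' + C, Function.update θ x (u.fill (t'.subst θ)))

/-- The right (or only) premise of a ground inference. -/
def rprem : GInf F V → Closure F V
  | .eqres C' s s' _ θ => (C' + {Lit.neg s s'}, θ)
  | .ps1 _ _ _ C _ _ θ => (C, θ)
  | .ps2 _ _ _ C _ _ θ => (C, θ)

/-- The left premise of a (Superposition) ground inference. -/
def lprem : GInf F V → Closure F V
  | .eqres C' s s' _ θ => (C' + {Lit.neg s s'}, θ)
  | .ps1 D' t t' _ _ _ θ => (D' + {Lit.pos t t'}, θ)
  | .ps2 D' t t' _ _ _ θ => (D' + {Lit.pos t t'}, θ)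

/-- The list of premises of a ground inference. -/
def prems : GInf F V → List (Closure F V)
  | .eqres C' s s' _ θ => [(C' + {Lit.neg s s'}, θ)]
  | .ps1 D' t t' C _ _ θ => [(D' + {Lit.pos t t'}, θ), (C, θ)]
  | .ps2 D' t t' C _ _ θ => [(D' + {Lit.pos t t'}, θ), (C, θ)]

/-- Is the inference a Superposition inference? -/
def IsSup : GInf F V → Prop
  | .eqres _ _ _ _ _ => False
  | .ps1 _ _ _ _ _ _ _ => True
  | .ps2 _ _ _ _ _ _ _ => True

/-- For a Superposition inference with left premise `(D' ∨ t ≈ t' · θ)`: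
the rule `tθ → t'θ` belongs to `R`. -/
def ruleIn (R : Set (Trm F V × Trm F V)) : GInf F V → Prop
  | .eqres _ _ _ _ _ => False
  | .ps1 _ t t' _ _ _ θ => (t.subst θ, t'.subst θ) ∈ R
  | .ps2 _ t t' _ _ _ θ => (t.subst θ, t'.subst θ) ∈ R

/-- Condition (iii) of Definition 5: a Superposition inference with left premise
`(D' ∨ t ≈ t' · θ)` such that `tθ ≻ t'θ` and `(tθ → t'θ) ∉ R`. -/
def ruleNotIn (O : ReductionOrdering F V) (R : Set (Trm F V × Trm F V)) : GInf F V → Prop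
  | .eqres _ _ _ _ _ => False
  | .ps1 _ t t' _ _ _ θ => O.gt (t.subst θ) (t'.subst θ) ∧ (t.subst θ, t'.subst θ) ∉ R
  | .ps2 _ t t' _ _ _ θ => O.gt (t.subst θ) (t'.subst θ) ∧ (t.subst θ, t'.subst θ) ∉ R

end GInf

/-- The common ordering side conditions of the Parallel Superposition rules, for a
left premise `D' ∨ t ≈ t'`, right premise `C`, overlapped term (or variable) `u`,
under the ground substitution `θ`. -/
def SideConds (O : ReductionOrdering F V) (D' : Clause F V) (t t' : Trm F V)
    (C : Clause F V) (u : Trm F V) (θ : V → Trm F V) : Prop :=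
  (u ∈ ssN C ∪ ssPp C →
     clauseGT O (Clause.subst θ C) (Clause.subst θ (D' + {Lit.pos t t'}))) ∧
  (∃ s s',
      (Lit.pos s s' ∈ C ∧ u ∈ s.subterms ∧ O.gt (s.subst θ) (s'.subst θ) ∧
        SMaxIn O (Lit.subst θ (Lit.pos s s')) (Clause.subst θ (C.erase (Lit.pos s s')))) ∨
      (Lit.neg s s' ∈ C ∧ u ∈ s.subterms ∧ O.gt (s.subst θ) (s'.subst θ) ∧
        MaxIn O (Lit.subst θ (Lit.neg s s')) (Clause.subst θ (C.erase (Lit.neg s s'))))) ∧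
  SMaxIn O (Lit.subst θ (Lit.pos t t')) (Clause.subst θ D') ∧
  O.gt (t.subst θ) (t'.subst θ)

/-- Validity of a ground inference: all side conditions of the corresponding rule of
the Ground Closure Horn Superposition Calculus hold. -/
def GInf.IsInf (O : ReductionOrdering F V) : GInf F V → Prop
  | .eqres C' s s' σ θ =>
      Closure.IsGround (C' + {Lit.neg s s'}, θ) ∧
      s.subst θ = s'.subst θ ∧ IsMGU σ s s' ∧
      MaxIn O (Lit.subst θ (Lit.neg s s')) (Clause.subst θ C')
  | .ps1 D' t t' C u σ θ =>
      Closure.IsGround (D' + {Lit.pos t t'}, θ) ∧ Closure.IsGround (C, θ) ∧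
      (¬ ∃ x, u = Trm.var x) ∧ t.subst θ = u.subst θ ∧ IsMGU σ t u ∧
      u ∈ allSub C ∧ SideConds O D' t t' C u θ
  | .ps2 D' t t' C x u θ =>
      Closure.IsGround (D' + {Lit.pos t t'}, θ) ∧ Closure.IsGround (C, θ) ∧
      Trm.var x ∈ allSub C ∧ θ x = u.fill (t.subst θ) ∧
      SideConds O D' t t' C (Trm.var x) θ

/-- Redundant closures (Definition 3). -/
def RedC (O : ReductionOrdering F V) (T : TieBreak F V) (N : Set (Closure F V))
    (c : Closure F V) : Prop :=
  ∀ R, GoodRS O R → Models R c ∨ ∃ d ∈ N, cloGT O T R c d ∧ ¬ Models R d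

/-- Redundant inferences (Definition 4). -/
def RedI (O : ReductionOrdering F V) (T : TieBreak F V) (N : Set (Closure F V))
    (ι : GInf F V) : Prop :=
  ∀ R, GoodRS O R →
    Models R ι.concl
    ∨ (∃ c ∈ N, cloGT O T R ι.rprem c ∧ ¬ Models R c)
    ∨ ι.ruleNotIn O R
    ∨ (ι.IsSup ∧ cloGT O T R ι.lprem ι.rprem)

section Candidate

/-- `s` is a strictly maximal term of the ground clause `D` and occurs in `D` only
(at the top) in positive literals. -/
def StrictMaxTermPos (O : ReductionOrdering F V) (D : Clause F V) (s : Trm F V) : Prop :=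
  (∀ w ∈ allSub D, w = s ∨ O.gt s w) ∧ s ∉ ssN D ∧ s ∉ ssPp D ∧ s ∈ tsP D

/-- The productivity conditions (Horn case) for the closure `(C' ∨ u ≈ u' · θ) ∈ N`
w.r.t. the partial interpretation `Rs`. -/
def ProdConds (O : ReductionOrdering F V) (N : Set (Closure F V))
    (Rs : Set (Trm F V × Trm F V)) (C' : Clause F V) (u u' : Trm F V)
    (θ : V → Trm F V) : Prop :=
  (C' + {Lit.pos u u'}, θ) ∈ N ∧
  Closure.IsGround (C' + {Lit.pos u u'}, θ) ∧
  StrictMaxTermPos O (Clause.subst θ (C' + {Lit.pos u u'})) (u.subst θ) ∧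
  Irred Rs (u.subst θ) ∧
  ¬ Models Rs (C' + {Lit.pos u u'}, θ) ∧
  O.gt (u.subst θ) (u'.subst θ)

/-- `(C' ∨ u ≈ u' · θ)` is the `≫_{Rs}`-smallest closure in `N` satisfying the
productivity conditions for the left-hand side `s`. -/
def ProducesFor (O : ReductionOrdering F V) (T : TieBreak F V) (N : Set (Closure F V))
    (Rs : Set (Trm F V × Trm F V)) (s : Trm F V) (C' : Clause F V) (u u' : Trm F V)
    (θ : V → Trm F V) : Prop :=
  u.subst θ = s ∧ ProdConds O N Rs C' u u' θ ∧
  ∀ D' v v' θ', v.subst θ' = s → ProdConds O N Rs D' v v' θ' →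
    (D' + {Lit.pos v v'}, θ') = (C' + {Lit.pos u u'}, θ) ∨
    cloGT O T Rs (D' + {Lit.pos v v'}, θ') (C' + {Lit.pos u u'}, θ)

/-- `R_s = ⋃_{t ≺ s} E_t`. -/
def Rbelow (O : ReductionOrdering F V) (E : Trm F V → Set (Trm F V × Trm F V))
    (s : Trm F V) : Set (Trm F V × Trm F V) :=
  { p | ∃ t, O.gt s t ∧ p ∈ E t }

/-- `R_* = ⋃_t E_t`. -/
def Rstar (E : Trm F V → Set (Trm F V × Trm F V)) : Set (Trm F V × Trm F V) :=
  { p | ∃ t, p ∈ E t }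

/-- `E` is the family of rule sets of the candidate interpretation constructed from `N`:
`E s = {s → u'θ}` for the `≫_{R_s}`-smallest productive closure for `s` if one
exists, and `E s = ∅` otherwise. -/
def IsCandidate (O : ReductionOrdering F V) (T : TieBreak F V) (N : Set (Closure F V))
    (E : Trm F V → Set (Trm F V × Trm F V)) : Prop :=
  ∀ s : Trm F V,
    (∃ C' u u' θ, ProducesFor O T N (Rbelow O E s) s C' u u' θ ∧
        E s = {(s, u'.subst θ)})
    ∨ ((¬ ∃ C' u u' θ, ProducesFor O T N (Rbelow O E s) s C' u u' θ) ∧ E s = ∅)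

/-- The closure `(C' ∨ u ≈ u' · θ)` produces the rule `uθ → u'θ` in the candidate
interpretation given by `E`. -/
def ProducesRule (O : ReductionOrdering F V) (T : TieBreak F V) (N : Set (Closure F V))
    (E : Trm F V → Set (Trm F V × Trm F V)) (C' : Clause F V) (u u' : Trm F V)
    (θ : V → Trm F V) : Prop :=
  ProducesFor O T N (Rbelow O E (u.subst θ)) (u.subst θ) C' u u' θ ∧
  E (u.subst θ) = {(u.subst θ, u'.subst θ)}

end Candidate

section NonHorn

/-- The graph of the (non-Horn) `R`-redex multiset function `rm_R(t)` of Definition 7. -/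
inductive RMn (R : Set (Trm F V × Trm F V)) :
    Trm F V → Multiset (Multiset (Trm F V)) → Prop
  | irred {t : Trm F V} : Irred R t → RMn R t 0
  | step {t t' u : Trm F V} {b : Bool} {S : Multiset (Multiset (Trm F V))} :
      RewAt R t t' u b → RMn R t' S → RMn R t (({u, u} : Multiset (Trm F V)) ::ₘ S)

open Classical in
/-- The (non-Horn) `R`-redex multiset `rm_R(t)` (via choice). -/
def rmN (R : Set (Trm F V × Trm F V)) (t : Trm F V) : Multiset (Multiset (Trm F V)) :=
  if h : ∃ S, RMn R t S then h.choose else 0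

/-- Contribution of one subterm of a negative literal to the non-Horn `nm_R(C·θ)`. -/
def nmNElt (R : Set (Trm F V × Trm F V)) (θ : V → Trm F V) :
    Trm F V → Multiset (Multiset (Trm F V))
  | .var x => rmN R (θ x)
  | .app f ts => rmN R (.app f (ts.map fun t => nf R (t.subst θ)))

/-- The non-Horn `R`-normalization multiset `nm_R(C·θ)` of Definition 8. -/
def nmN (R : Set (Trm F V × Trm F V)) (C : Clause F V) (θ : V → Trm F V) :
    Multiset (Multiset (Trm F V)) :=
  (ssN C).sum (nmNElt R θ) +
  (tsN C).sum (fun t => {({nf R (t.subst θ), nf R (t.subst θ)} : Multiset (Trm F V))}) +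
  (C.map fun L => match L with
     | .pos s s' => (({({s.subst θ, s'.subst θ} : Multiset (Trm F V))}) :
         Multiset (Multiset (Trm F V)))
     | .neg _ _ => 0).sum

/-- The non-Horn `R`-normalization closure ordering `≫_R` of Definition 8. -/
def cloGTN (O : ReductionOrdering F V) (T : TieBreak F V) (R : Set (Trm F V × Trm F V))
    (c d : Closure F V) : Prop :=
  MultGT (MultGT O.gt) (nmN R c.1 c.2) (nmN R d.1 d.2)
  ∨ (nmN R c.1 c.2 = nmN R d.1 d.2 ∧ clauseGT O c.inst d.inst)
  ∨ (nmN R c.1 c.2 = nmN R d.1 d.2 ∧ c.inst = d.inst ∧ T.gt c d)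

end NonHorn

section Lifting

/-- The set `G(N)` of ground closures of a set `N` of clauses. -/
def GClosures (N : Set (Clause F V)) : Set (Closure F V) :=
  { c | c.1 ∈ N ∧ c.IsGround }

/-- The ordering side conditions of the non-ground Parallel Superposition rule, for
left premise `D' ∨ t ≈ t'`, right premise `C`, overlapped non-variable subterm `u`,
and mgu `σ`. -/
def NGSideConds (O : ReductionOrdering F V) (D' : Clause F V) (t t' : Trm F V)
    (C : Clause F V) (u : Trm F V) (σ : V → Trm F V) : Prop :=
  (u ∈ ssN C ∪ ssPp C →
     ¬ (clauseGT O (Clause.subst σ (D' + {Lit.pos t t'})) (Clause.subst σ C) ∨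
        Clause.subst σ C = Clause.subst σ (D' + {Lit.pos t t'}))) ∧
  (∃ s s',
      (Lit.pos s s' ∈ C ∧ u ∈ s.subterms ∧
        ¬ (O.gt (s'.subst σ) (s.subst σ) ∨ s.subst σ = s'.subst σ) ∧
        SMaxIn O (Lit.subst σ (Lit.pos s s')) (Clause.subst σ (C.erase (Lit.pos s s')))) ∨
      (Lit.neg s s' ∈ C ∧ u ∈ s.subterms ∧
        ¬ (O.gt (s'.subst σ) (s.subst σ) ∨ s.subst σ = s'.subst σ) ∧
        MaxIn O (Lit.subst σ (Lit.neg s s')) (Clause.subst σ (C.erase (Lit.neg s s'))))) ∧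
  SMaxIn O (Lit.subst σ (Lit.pos t t')) (Clause.subst σ D') ∧
  ¬ (O.gt (t'.subst σ) (t.subst σ) ∨ t.subst σ = t'.subst σ)

/-- The ground inference `ι` is a ground instance of an inference of the
(non-ground) Horn Superposition Calculus with Parallel Superposition whose
premises are exactly the clauses occurring in the premise closures of `ι`. -/
def IsGroundInstOfNG (O : ReductionOrdering F V) : GInf F V → Prop
  | .eqres C' s s' σ _ =>
      IsMGU σ s s' ∧
      MaxIn O (Lit.subst σ (Lit.neg s s')) (Clause.subst σ C')
  | .ps1 D' t t' C u σ _ =>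
      (¬ ∃ x, u = Trm.var x) ∧ IsMGU σ t u ∧ u ∈ allSub C ∧
      NGSideConds O D' t t' C u σ
  | .ps2 _ _ _ _ _ _ _ => False

/-- Non-ground inferences of the Horn Superposition Calculus with Parallel
Superposition. -/
inductive NGInf (F V : Type) : Type
  | eqres (C' : Clause F V) (s s' : Trm F V) (σ : V → Trm F V)
  | psup (D' : Clause F V) (t t' : Trm F V) (C : Clause F V) (u : Trm F V) (σ : V → Trm F V)

namespace NGInf

/-- Side conditions of the non-ground rules. -/
def IsInf (O : ReductionOrdering F V) : NGInf F V → Prop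
  | .eqres C' s s' σ =>
      IsMGU σ s s' ∧ MaxIn O (Lit.subst σ (Lit.neg s s')) (Clause.subst σ C')
  | .psup D' t t' C u σ =>
      (¬ ∃ x, u = Trm.var x) ∧ IsMGU σ t u ∧ u ∈ allSub C ∧
      NGSideConds O D' t t' C u σ

/-- Premises of a non-ground inference. -/
def prems : NGInf F V → List (Clause F V)
  | .eqres C' s s' _ => [C' + {Lit.neg s s'}]
  | .psup D' t t' C _ _ => [D' + {Lit.pos t t'}, C]

/-- Conclusion of a non-ground inference. -/
def concl : NGInf F V → Clause F V
  | .eqres C' _ _ σ => Clause.subst σ C'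
  | .psup D' _ t' C u σ => Clause.subst σ (D' + Clause.replAll u t' C)

/-- The set `G(ι)` of ground instances of a non-ground inference. -/
def GInsts (O : ReductionOrdering F V) : NGInf F V → Set (GInf F V)
  | .eqres C' s s' σ => { g | ∃ θ, g = GInf.eqres C' s s' σ θ ∧ g.IsInf O }
  | .psup D' t t' C u σ => { g | ∃ θ, g = GInf.ps1 D' t t' C u σ θ ∧ g.IsInf O }

end NGInf

end Lifting
namespace WJ
section Basics

theorem ground_args {F V : Type} {f : F} {ts : List (Trm F V)}
    (h : (Trm.app f ts).IsGround) : ∀ t ∈ ts, t.IsGround := by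
  cases h with | app h => exact h
variable {F V : Type}

namespace Trm

theorem subst_app (θ : V → Trm F V) (f : F) (ts : List (Trm F V)) :
    (Trm.app f ts).subst θ = Trm.app f (ts.map (fun t => t.subst θ)) := by
  rw [Trm.subst]
  congr 1
  simp [List.map_attach_eq_pmap]

theorem subst_var (θ : V → Trm F V) (x : V) : (Trm.var x : Trm F V).subst θ = θ x := by
  rw [Trm.subst]

theorem mem_foldr_union {α : Type} [DecidableEq α] (L : List (Finset α)) (x : α) :
    x ∈ L.foldr (· ∪ ·) ∅ ↔ ∃ A ∈ L, x ∈ A := by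
  induction L with
  | nil => simp
  | cons a l ih => simp [ih]

theorem mem_subterms_app {f : F} {ts : List (Trm F V)} {u : Trm F V} :
    u ∈ (Trm.app f ts).subterms ↔ u = Trm.app f ts ∨ ∃ t ∈ ts, u ∈ t.subterms := by
  rw [Trm.subterms]
  simp [mem_foldr_union]

theorem mem_subterms_var {x : V} {u : Trm F V} :
    u ∈ (Trm.var x : Trm F V).subterms ↔ u = Trm.var x := by
  rw [Trm.subterms]; simp

theorem self_mem_subterms : ∀ t : Trm F V, t ∈ t.subterms
  | .var x => by rw [mem_subterms_var]
  | .app f ts => by rw [mem_subterms_app]; left; rfl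

theorem mem_psubterms_app {f : F} {ts : List (Trm F V)} {u : Trm F V} :
    u ∈ (Trm.app f ts).psubterms ↔ ∃ t ∈ ts, u ∈ t.subterms := by
  rw [Trm.psubterms]
  simp [mem_foldr_union]

theorem ground_of_mem_subterms : ∀ (t : Trm F V), t.IsGround → ∀ u ∈ t.subterms, u.IsGround
  | .var _ => by intro hg; cases hg
  | .app f ts => by
    intro hg u hu
    rw [mem_subterms_app] at hu
    rcases hu with rfl | ⟨t, ht, hu⟩
    · exact hg
    · have : sizeOf t < sizeOf (Trm.app f ts) := by
        have := List.sizeOf_lt_of_mem ht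
        simp only [Trm.app.sizeOf_spec]; omega
      exact ground_of_mem_subterms t (ground_args hg t ht) u hu
termination_by t => sizeOf t

theorem subterms_subst (θ : V → Trm F V) :
    ∀ (t : Trm F V), ∀ u ∈ t.subterms, u.subst θ ∈ (t.subst θ).subterms
  | .var x => by
    intro u hu
    rw [mem_subterms_var] at hu; subst hu
    exact self_mem_subterms _
  | .app f ts => by
    intro u hu
    rw [mem_subterms_app] at hu
    rw [subst_app, mem_subterms_app]
    rcases hu with rfl | ⟨t, ht, hu⟩
    · left; rw [subst_app]
    · right
      have : sizeOf t < sizeOf (Trm.app f ts) := by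
        have := List.sizeOf_lt_of_mem ht
        simp only [Trm.app.sizeOf_spec]; omega
      exact ⟨t.subst θ, List.mem_map_of_mem ht, subterms_subst θ t u hu⟩
termination_by t => sizeOf t

theorem psubterms_subst (θ : V → Trm F V) (t : Trm F V) :
    ∀ u ∈ t.psubterms, u.subst θ ∈ (t.subst θ).psubterms := by
  intro u hu
  cases t with
  | var x => rw [Trm.psubterms] at hu; simp at hu
  | app f ts =>
    rw [mem_psubterms_app] at hu
    rcases hu with ⟨t, ht, hu⟩
    rw [subst_app, mem_psubterms_app]
    exact ⟨t.subst θ, List.mem_map_of_mem ht, subterms_subst θ t u hu⟩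

theorem psubterms_subset_subterms : ∀ (t : Trm F V), ∀ u ∈ t.psubterms, u ∈ t.subterms := by
  intro t u hu
  cases t with
  | var x => rw [Trm.psubterms] at hu; simp at hu
  | app f ts =>
    rw [mem_psubterms_app] at hu
    rw [mem_subterms_app]
    exact Or.inr hu

end Trm

variable (O : ReductionOrdering F V)

theorem gt_irrefl (t : Trm F V) : ¬ O.gt t t := by
  have h := O.wf.apply t
  induction h with
  | intro t _ IH => exact fun hgt => IH t hgt hgt

theorem gt_asymm {a b : Trm F V} (h : O.gt a b) : ¬ O.gt b a :=
  fun h' => gt_irrefl O a (O.trans h h')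

theorem not_gt_ctx (f : F) (l r : List (Trm F V)) (t0 : Trm F V) :
    ¬ O.gt t0 (.app f (l ++ t0 :: r)) := by
  have main : ∀ t : Trm F V, ¬ O.gt t (.app f (l ++ t :: r)) := by
    intro t
    induction (O.wf.apply t) with
    | intro t _ IH =>
      intro hgt
      exact IH _ hgt (O.compat_ctx f l r hgt)
  exact main t0

/-- one-level subterm comparison for ground terms -/
theorem gt_of_arg {f : F} {ts : List (Trm F V)} {t : Trm F V}
    (hg : (Trm.app f ts).IsGround) (ht : t ∈ ts) : O.gt (Trm.app f ts) t := by
  obtain ⟨l, r, rfl⟩ := List.append_of_mem ht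
  have hgt : t.IsGround := ground_args hg t ht
  have hne : t ≠ Trm.app f (l ++ t :: r) := by
    intro he
    have h1 := List.sizeOf_lt_of_mem ht
    have : sizeOf t < sizeOf (Trm.app f (l ++ t :: r)) := by
      simp only [Trm.app.sizeOf_spec]; omega
    rw [← he] at this; omega
  rcases O.total_ground hgt hg hne with h | h
  · exact absurd h (not_gt_ctx O f l r t)
  · exact h

theorem ge_of_subterm : ∀ (t : Trm F V), t.IsGround → ∀ u ∈ t.subterms, u = t ∨ O.gt t u
  | .var _ => by intro hg; cases hg
  | .app f ts => by
    intro hg u hu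
    rw [Trm.mem_subterms_app] at hu
    rcases hu with rfl | ⟨t, ht, hu⟩
    · exact Or.inl rfl
    · right
      have hszt : sizeOf t < sizeOf (Trm.app f ts) := by
        have := List.sizeOf_lt_of_mem ht
        simp only [Trm.app.sizeOf_spec]; omega
      have htg : t.IsGround := ground_args hg t ht
      have h1 : O.gt (Trm.app f ts) t := gt_of_arg O hg ht
      rcases ge_of_subterm t htg u hu with rfl | h2
      · exact h1
      · exact O.trans h1 h2
termination_by t => sizeOf t

theorem gt_of_psubterm {t : Trm F V} (hg : t.IsGround) {u : Trm F V}
    (hu : u ∈ t.psubterms) : O.gt t u := by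
  cases t with
  | var x => rw [Trm.psubterms] at hu; simp at hu
  | app f ts =>
    rw [Trm.mem_psubterms_app] at hu
    rcases hu with ⟨a, ha, hu⟩
    have hag : a.IsGround := ground_args hg a ha
    have h1 : O.gt (Trm.app f ts) a := gt_of_arg O hg ha
    rcases ge_of_subterm O a hag u hu with rfl | h2
    · exact h1
    · exact O.trans h1 h2

end Basics
end WJ
namespace WJ
section Rewriting
variable {F V : Type} (O : ReductionOrdering F V)

/-- rule well-formedness -/
def Rules (R : Set (Trm F V × Trm F V)) : Prop :=
  ∀ p ∈ R, p.1.IsGround ∧ p.2.IsGround ∧ O.gt p.1 p.2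

variable {O}

theorem rewAt_mono {R R' : Set (Trm F V × Trm F V)} {t t' u : Trm F V} {b : Bool}
    (h : RewAt R t t' u b) (hsub : ∀ p ∈ R, p.1 = u → p ∈ R') : RewAt R' t t' u b := by
  induction h with
  | root hr => exact RewAt.root (hsub _ hr rfl)
  | congr _ ih => exact RewAt.congr (ih hsub)

theorem step_mono {R R' : Set (Trm F V × Trm F V)} (hsub : R ⊆ R') {t t' : Trm F V}
    (h : Step R t t') : Step R' t t' := by
  obtain ⟨u, b, h⟩ := h
  exact ⟨u, b, rewAt_mono h (fun p hp _ => hsub hp)⟩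

theorem ground_mid {f : F} {l r : List (Trm F V)} {t : Trm F V}
    (h : (Trm.app f (l ++ t :: r)).IsGround) : t.IsGround :=
  ground_args h t (by simp)

theorem ground_replace {f : F} {l r : List (Trm F V)} {t t' : Trm F V}
    (h : (Trm.app f (l ++ t :: r)).IsGround) (ht' : t'.IsGround) :
    (Trm.app f (l ++ t' :: r)).IsGround := by
  refine Trm.IsGround.app (fun u hu => ?_)
  rcases List.mem_append.1 hu with h1 | h1
  · exact ground_args h u (by simp [h1])
  · rcases List.mem_cons.1 h1 with rfl | h2
    · exact ht'
    · exact ground_args h u (by simp [h2])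

theorem rewAt_ground {R : Set (Trm F V × Trm F V)} (hR : Rules O R) {t t' u : Trm F V} {b : Bool}
    (h : RewAt R t t' u b) (hg : t.IsGround) : t'.IsGround := by
  induction h with
  | root hr => exact (hR _ hr).2.1
  | congr _ ih => exact ground_replace hg (ih (ground_mid hg))

theorem rewAt_gt {R : Set (Trm F V × Trm F V)} (hR : Rules O R) {t t' u : Trm F V} {b : Bool}
    (h : RewAt R t t' u b) : O.gt t t' := by
  induction h with
  | root hr => exact (hR _ hr).2.2
  | congr _ ih => exact O.compat_ctx _ _ _ ih

theorem rewAt_lhs_le {R : Set (Trm F V × Trm F V)} {t t' u : Trm F V} {b : Bool}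
    (h : RewAt R t t' u b) (hg : t.IsGround) : u = t ∨ O.gt t u := by
  induction h with
  | root _ => exact Or.inl rfl
  | @congr t0 t0' u b f l r h0 ih =>
    right
    have hmem : t0 ∈ l ++ t0 :: r := by simp
    have h1 : O.gt (Trm.app f (l ++ t0 :: r)) t0 := gt_of_arg O hg hmem
    rcases ih (ground_mid hg) with rfl | h2
    · exact h1
    · exact O.trans h1 h2

theorem rewAt_true_root {R : Set (Trm F V × Trm F V)} {t t' u : Trm F V}
    (h : RewAt R t t' u true) : t = u ∧ (u, t') ∈ R := by
  cases h with
  | root hr => exact ⟨rfl, hr⟩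

theorem step_gt {R : Set (Trm F V × Trm F V)} (hR : Rules O R) {t t' : Trm F V}
    (h : Step R t t') : O.gt t t' := by
  obtain ⟨u, b, h⟩ := h; exact rewAt_gt hR h

theorem step_ground {R : Set (Trm F V × Trm F V)} (hR : Rules O R) {t t' : Trm F V}
    (h : Step R t t') (hg : t.IsGround) : t'.IsGround := by
  obtain ⟨u, b, h⟩ := h; exact rewAt_ground hR h hg

theorem step_lhs_le {R : Set (Trm F V × Trm F V)} {t t' : Trm F V}
    (h : Step R t t') (hg : t.IsGround) : ∃ u b, RewAt R t t' u b ∧ (u = t ∨ O.gt t u) := by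
  obtain ⟨u, b, h⟩ := h; exact ⟨u, b, h, rewAt_lhs_le h hg⟩

theorem reach_ground {R : Set (Trm F V × Trm F V)} (hR : Rules O R) {t t' : Trm F V}
    (h : Relation.ReflTransGen (Step R) t t') (hg : t.IsGround) : t'.IsGround := by
  induction h with
  | refl => exact hg
  | tail _ hstep ih => exact step_ground hR hstep ih

theorem reach_ge {R : Set (Trm F V × Trm F V)} (hR : Rules O R) {t t' : Trm F V}
    (h : Relation.ReflTransGen (Step R) t t') : t' = t ∨ O.gt t t' := by
  induction h with
  | refl => exact Or.inl rfl
  | tail _ hstep ih =>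
    rcases ih with rfl | h1
    · exact Or.inr (step_gt hR hstep)
    · exact Or.inr (O.trans h1 (step_gt hR hstep))

theorem step_congr {R : Set (Trm F V × Trm F V)} {t t' : Trm F V} (f : F) (l r : List (Trm F V))
    (h : Step R t t') : Step R (.app f (l ++ t :: r)) (.app f (l ++ t' :: r)) := by
  obtain ⟨u, b, h⟩ := h
  exact ⟨u, false, RewAt.congr h⟩

theorem reach_congr {R : Set (Trm F V × Trm F V)} {t t' : Trm F V} (f : F) (l r : List (Trm F V))
    (h : Relation.ReflTransGen (Step R) t t') :
    Relation.ReflTransGen (Step R) (.app f (l ++ t :: r)) (.app f (l ++ t' :: r)) := by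
  induction h with
  | refl => exact Relation.ReflTransGen.refl
  | tail _ hstep ih => exact ih.tail (step_congr f l r hstep)

theorem reach_app_aux {R : Set (Trm F V × Trm F V)} (f : F) :
    ∀ {l1 l2 : List (Trm F V)}, List.Forall₂ (Relation.ReflTransGen (Step R)) l1 l2 →
    ∀ (pre : List (Trm F V)),
    Relation.ReflTransGen (Step R) (.app f (pre ++ l1)) (.app f (pre ++ l2)) := by
  intro l1 l2 h
  induction h with
  | nil => intro pre; exact Relation.ReflTransGen.refl
  | @cons a b l1 l2 hab _ ih =>
    intro pre
    have h1 := reach_congr (R := R) f pre l1 hab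
    have h2 := ih (pre ++ [b])
    simp only [List.append_assoc, List.singleton_append] at h2
    exact h1.trans h2

theorem reach_app {R : Set (Trm F V × Trm F V)} (f : F) {l1 l2 : List (Trm F V)}
    (h : List.Forall₂ (Relation.ReflTransGen (Step R)) l1 l2) :
    Relation.ReflTransGen (Step R) (.app f l1) (.app f l2) := by
  have := reach_app_aux f h []
  simpa using this

theorem step_lift_of_subterm {R : Set (Trm F V × Trm F V)} :
    ∀ (t u u2 : Trm F V), u ∈ t.subterms → Step R u u2 →
      ∃ t2, Step R t t2
  | .var x, u, u2 => by
    intro hu hs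
    rw [Trm.mem_subterms_var] at hu; subst hu
    exact ⟨u2, hs⟩
  | .app f ts, u, u2 => by
    intro hu hs
    rw [Trm.mem_subterms_app] at hu
    rcases hu with rfl | ⟨a, ha, hu⟩
    · exact ⟨u2, hs⟩
    · have hsz : sizeOf a < sizeOf (Trm.app f ts) := by
        have := List.sizeOf_lt_of_mem ha
        simp only [Trm.app.sizeOf_spec]; omega
      obtain ⟨a2, ha2⟩ := step_lift_of_subterm a u u2 hu hs
      obtain ⟨l, r, rfl⟩ := List.append_of_mem ha
      exact ⟨_, step_congr f l r ha2⟩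
termination_by t => sizeOf t

theorem reach_irred_eq {R : Set (Trm F V × Trm F V)} {t t' : Trm F V} (hirr : Irred R t)
    (h : Relation.ReflTransGen (Step R) t t') : t' = t := by
  rcases (Relation.ReflTransGen.cases_head h) with rfl | ⟨c, hc, _⟩
  · rfl
  · exact absurd hc (hirr c)

theorem exists_nf {R : Set (Trm F V × Trm F V)} (hR : Rules O R) {t : Trm F V}
    (hg : t.IsGround) : ∃ t', ReachNF R t t' := by
  have main : ∀ t : Trm F V, t.IsGround → ∃ t', ReachNF R t t' := by
    intro t
    induction (O.wf.apply t) with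
    | intro t _ IH =>
      intro hgr
      by_cases hirr : Irred R t
      · exact ⟨t, Relation.ReflTransGen.refl, hirr⟩
      · have : ∃ t1, Step R t t1 := by
          simp only [Irred, not_forall, not_not] at hirr; exact hirr
        obtain ⟨t1, h1⟩ := this
        obtain ⟨t', h2, h3⟩ := IH t1 (step_gt hR h1) (step_ground hR h1 hgr)
        exact ⟨t', Relation.ReflTransGen.head h1 h2, h3⟩
  exact main t hg

theorem nf_spec {R : Set (Trm F V × Trm F V)} {t : Trm F V} (h : ∃ t', ReachNF R t t') :
    ReachNF R t (nf R t) := by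
  rw [nf, dif_pos h]; exact h.choose_spec

theorem nf_irred {R : Set (Trm F V × Trm F V)} {t : Trm F V} (h : Irred R t) :
    nf R t = t := by
  have hex : ∃ t', ReachNF R t t' := ⟨t, Relation.ReflTransGen.refl, h⟩
  exact reach_irred_eq h (nf_spec hex).1

theorem nf_le {R : Set (Trm F V × Trm F V)} (hR : Rules O R) {t : Trm F V}
    (hg : t.IsGround) : nf R t = t ∨ O.gt t (nf R t) :=
  reach_ge hR (nf_spec (exists_nf hR hg)).1

theorem nf_gt_of_red {R : Set (Trm F V × Trm F V)} (hR : Rules O R) {t : Trm F V}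
    (hg : t.IsGround) (hred : ¬ Irred R t) : O.gt t (nf R t) := by
  rcases nf_le hR hg (R := R) with h | h
  · exact absurd ((h ▸ (nf_spec (exists_nf hR hg)).2) : Irred R t) hred
  · exact h

theorem nf_ground {R : Set (Trm F V × Trm F V)} (hR : Rules O R) {t : Trm F V}
    (hg : t.IsGround) : (nf R t).IsGround :=
  reach_ground hR (nf_spec (exists_nf hR hg)).1 hg

end Rewriting
end WJ
namespace WJ
section Candidate
variable {F V : Type} {O : ReductionOrdering F V} {T : TieBreak F V} {N : Set (Closure F V)}
  {E : Trm F V → Set (Trm F V × Trm F V)} (hE : IsCandidate O T N E)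
include hE
set_option linter.unusedSectionVars false

omit hE in
theorem ground_sides_of_prodconds {Rs : Set (Trm F V × Trm F V)} {C' : Clause F V}
    {u u' : Trm F V} {θ : V → Trm F V} (h : ProdConds O N Rs C' u u' θ) :
    (u.subst θ).IsGround ∧ (u'.subst θ).IsGround := by
  have hg := h.2.1
  have hmem : Lit.pos u u' ∈ C' + {Lit.pos u u'} := by simp
  have : Lit.subst θ (Lit.pos u u') ∈ Closure.inst (C' + {Lit.pos u u'}, θ) :=
    Multiset.mem_map_of_mem _ hmem
  have := hg _ this
  exact this

theorem candE {p : Trm F V × Trm F V} {w : Trm F V} (hp : p ∈ E w) :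
    p.1 = w ∧ p.1.IsGround ∧ p.2.IsGround ∧ O.gt p.1 p.2 ∧ Irred (Rbelow O E w) w ∧
      (∀ q ∈ E w, q = p) := by
  rcases hE w with ⟨C', u, u', θ, hPF, hEs⟩ | ⟨_, hEs⟩
  · rw [hEs] at hp
    rcases Set.mem_singleton_iff.1 hp with rfl
    obtain ⟨hu, hPC, _⟩ := hPF
    obtain ⟨hg1, hg2⟩ := ground_sides_of_prodconds hPC
    refine ⟨rfl, by rw [← hu]; exact hg1, hg2, ?_, ?_, ?_⟩
    · have := hPC.2.2.2.2.2
      rw [hu] at this; exact this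
    · have := hPC.2.2.2.1
      rw [hu] at this; exact this
    · intro q hq; rw [hEs] at hq; exact Set.mem_singleton_iff.1 hq
  · rw [hEs] at hp; exact absurd hp (Set.notMem_empty _)

theorem rstar_mem_E {p : Trm F V × Trm F V} (hp : p ∈ Rstar E) : p ∈ E p.1 := by
  obtain ⟨w, hw⟩ := hp
  have := (candE hE hw).1
  rw [this]; exact hw

theorem rstar_rules : Rules O (Rstar E) := by
  intro p hp
  obtain ⟨w, hw⟩ := hp
  obtain ⟨_, h1, h2, h3, _, _⟩ := candE hE hw
  exact ⟨h1, h2, h3⟩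

theorem rstar_rhs_unique {l r1 r2 : Trm F V} (h1 : (l, r1) ∈ Rstar E)
    (h2 : (l, r2) ∈ Rstar E) : r1 = r2 := by
  have m1 := rstar_mem_E hE h1
  have m2 := rstar_mem_E hE h2
  have := (candE hE m1).2.2.2.2.2 _ m2
  exact (Prod.mk.injEq _ _ _ _ ▸ this.symm) |>.2

omit hE in
theorem rbelow_subset {s : Trm F V} : Rbelow O E s ⊆ Rstar E := by
  intro p hp
  obtain ⟨w, _, hw⟩ := hp
  exact ⟨w, hw⟩

theorem mem_rbelow {s : Trm F V} {p : Trm F V × Trm F V} (hp : p ∈ Rstar E)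
    (hlt : O.gt s p.1) : p ∈ Rbelow O E s := by
  have := rstar_mem_E hE hp
  exact ⟨p.1, hlt, this⟩

theorem rbelow_rules (s : Trm F V) : Rules O (Rbelow O E s) := by
  intro p hp; exact rstar_rules hE p (rbelow_subset hp)

theorem lhs_irred {p : Trm F V × Trm F V} (hp : p ∈ Rstar E) :
    Irred (Rbelow O E p.1) p.1 :=
  (candE hE (rstar_mem_E hE hp)).2.2.2.2.1

/-! transfer between `Rstar E` and `Rbelow O E s` on terms smaller than `s` -/

variable {s : Trm F V}

theorem step_small {t t' : Trm F V} (hg : t.IsGround) (hlt : O.gt s t)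
    (h : Step (Rstar E) t t') : Step (Rbelow O E s) t t' := by
  obtain ⟨u, b, h⟩ := h
  have hle := rewAt_lhs_le (O := O) h hg
  have hu : O.gt s u := by
    rcases hle with rfl | h2
    · exact hlt
    · exact O.trans hlt h2
  exact ⟨u, b, rewAt_mono h (fun p hp hpu => mem_rbelow hE hp (hpu ▸ hu))⟩

theorem irred_small {t : Trm F V} (hg : t.IsGround) (hlt : O.gt s t)
    (h : Irred (Rbelow O E s) t) : Irred (Rstar E) t :=
  fun t' hstep => h t' (step_small hE hg hlt hstep)

theorem irred_of_irred_rstar {R : Set (Trm F V × Trm F V)} (hsub : R ⊆ Rstar E)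
    {t : Trm F V} (h : Irred (Rstar E) t) : Irred R t :=
  fun t' hstep => h t' (step_mono hsub hstep)

theorem RM_small_fwd : ∀ {t : Trm F V} {m : ℕ} {S : Multiset (Trm F V × ℕ)},
    RM (Rstar E) t m S → t.IsGround → O.gt s t → RM (Rbelow O E s) t m S := by
  intro t m S h
  induction h with
  | irred h => intro _ _; exact RM.irred (irred_of_irred_rstar hE rbelow_subset h)
  | @step_top t t' u b m S h hb _ ih =>
    intro hg hlt
    have hg' : t'.IsGround := rewAt_ground (rstar_rules hE) h hg
    have hlt' : O.gt s t' := O.trans hlt (rewAt_gt (rstar_rules hE) h)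
    have hstep : Step (Rbelow O E s) t t' := step_small hE hg hlt ⟨u, b, h⟩
    obtain ⟨u2, b2, h2⟩ := hstep
    -- need same u and b; redo restriction directly
    have hle := rewAt_lhs_le (O := O) h hg
    have hu : O.gt s u := by rcases hle with rfl | h2a; exacts [hlt, O.trans hlt h2a]
    exact RM.step_top (rewAt_mono h (fun p hp hpu => mem_rbelow hE hp (hpu ▸ hu))) hb
      (ih hg' hlt')
  | @step_deep t t' u S h _ ih =>
    intro hg hlt
    have hg' : t'.IsGround := rewAt_ground (rstar_rules hE) h hg
    have hlt' : O.gt s t' := O.trans hlt (rewAt_gt (rstar_rules hE) h)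
    have hle := rewAt_lhs_le (O := O) h hg
    have hu : O.gt s u := by rcases hle with rfl | h2a; exacts [hlt, O.trans hlt h2a]
    exact RM.step_deep (rewAt_mono h (fun p hp hpu => mem_rbelow hE hp (hpu ▸ hu)))
      (ih hg' hlt')

theorem RM_small_bwd : ∀ {t : Trm F V} {m : ℕ} {S : Multiset (Trm F V × ℕ)},
    RM (Rbelow O E s) t m S → t.IsGround → O.gt s t → RM (Rstar E) t m S := by
  intro t m S h
  induction h with
  | irred h => intro hg hlt; exact RM.irred (irred_small hE hg hlt h)
  | @step_top t t' u b m S h hb _ ih =>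
    intro hg hlt
    have h' := rewAt_mono h (fun p hp _ => rbelow_subset hp)
    have hg' : t'.IsGround := rewAt_ground (rstar_rules hE) h' hg
    have hlt' : O.gt s t' := O.trans hlt (rewAt_gt (rstar_rules hE) h')
    exact RM.step_top h' hb (ih hg' hlt')
  | @step_deep t t' u S h _ ih =>
    intro hg hlt
    have h' := rewAt_mono h (fun p hp _ => rbelow_subset hp)
    have hg' : t'.IsGround := rewAt_ground (rstar_rules hE) h' hg
    have hlt' : O.gt s t' := O.trans hlt (rewAt_gt (rstar_rules hE) h')
    exact RM.step_deep h' (ih hg' hlt')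

theorem rm_small {t : Trm F V} (hg : t.IsGround) (hlt : O.gt s t) (m : ℕ) :
    rm (Rstar E) t m = rm (Rbelow O E s) t m := by
  have hpred : RM (Rstar E) t m = RM (Rbelow O E s) t m := by
    funext S
    exact propext ⟨fun h => RM_small_fwd hE h hg hlt, fun h => RM_small_bwd hE h hg hlt⟩
  unfold rm
  rw [hpred]

theorem reach_small {t t' : Trm F V} (h : Relation.ReflTransGen (Step (Rstar E)) t t')
    (hg : t.IsGround) (hlt : O.gt s t) :
    Relation.ReflTransGen (Step (Rbelow O E s)) t t' := by
  revert hg hlt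
  induction h using Relation.ReflTransGen.head_induction_on with
  | refl => intro _ _; exact Relation.ReflTransGen.refl
  | @head a c hac _ ih =>
    intro hg hlt
    have hstep := step_small hE hg hlt hac
    have hgc := step_ground (rstar_rules hE) hac hg
    have hltc := O.trans hlt (step_gt (rstar_rules hE) hac)
    exact Relation.ReflTransGen.head hstep (ih hgc hltc)

theorem nf_small {t : Trm F V} (hg : t.IsGround) (hlt : O.gt s t) :
    nf (Rstar E) t = nf (Rbelow O E s) t := by
  have hpred : ReachNF (Rstar E) t = ReachNF (Rbelow O E s) t := by
    funext t'
    refine propext ⟨fun ⟨h1, h2⟩ => ?_, fun ⟨h1, h2⟩ => ?_⟩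
    · refine ⟨reach_small hE h1 hg hlt, ?_⟩
      exact irred_of_irred_rstar hE rbelow_subset h2
    · have h1' : Relation.ReflTransGen (Step (Rstar E)) t t' :=
        Relation.ReflTransGen.mono (fun a b => step_mono rbelow_subset) _ _ h1
      refine ⟨h1', ?_⟩
      have hg' : t'.IsGround := reach_ground (rstar_rules hE) h1' hg
      have hlt' : O.gt s t' := by
        rcases reach_ge (rstar_rules hE) h1' with rfl | h3
        · exact hlt
        · exact O.trans hlt h3
      exact irred_small hE hg' hlt' h2
  unfold nf
  rw [hpred]

end Candidate
end WJ
namespace WJ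
section Confluence
variable {F V : Type}

theorem list_split {α : Type} :
    ∀ (l : List α) (x : α) (r l2 : List α) (y : α) (r2 : List α),
    l ++ x :: r = l2 ++ y :: r2 →
    (l = l2 ∧ x = y ∧ r = r2) ∨
    (∃ mid, l2 = l ++ x :: mid ∧ r = mid ++ y :: r2) ∨
    (∃ mid, l = l2 ++ y :: mid ∧ r2 = mid ++ x :: r)
  | [], x, r, [], y, r2 => by
    intro h; simp at h; exact Or.inl ⟨rfl, h.1, h.2⟩
  | [], x, r, a :: l2', y, r2 => by
    intro h; simp at h
    exact Or.inr (Or.inl ⟨l2', by simp [h.1], h.2⟩)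
  | a :: l', x, r, [], y, r2 => by
    intro h; simp at h
    exact Or.inr (Or.inr ⟨l', by simp [h.1], h.2.symm⟩)
  | a :: l', x, r, a2 :: l2', y, r2 => by
    intro h
    simp only [List.cons_append, List.cons.injEq] at h
    obtain ⟨rfl, h⟩ := h
    rcases list_split l' x r l2' y r2 h with ⟨rfl, rfl, rfl⟩ | ⟨mid, h1, h2⟩ | ⟨mid, h1, h2⟩
    · exact Or.inl ⟨rfl, rfl, rfl⟩
    · exact Or.inr (Or.inl ⟨mid, by simp [h1], h2⟩)
    · exact Or.inr (Or.inr ⟨mid, by simp [h1], h2⟩)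

variable {O : ReductionOrdering F V} {T : TieBreak F V} {N : Set (Closure F V)}
  {E : Trm F V → Set (Trm F V × Trm F V)} (hE : IsCandidate O T N E)
include hE
set_option linter.unusedSectionVars false

theorem no_inner_step {v x x' : Trm F V} {u2 : Trm F V} {b2 : Bool} {f : F}
    {l r : List (Trm F V)} (hr : (Trm.app f (l ++ x :: r), v) ∈ Rstar E)
    (hinner : RewAt (Rstar E) x x' u2 b2) : False := by
  set t := Trm.app f (l ++ x :: r) with ht
  have htg : t.IsGround := (rstar_rules hE _ hr).1
  have hxg : x.IsGround := ground_mid htg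
  have hxt : O.gt t x := gt_of_arg O htg (by simp)
  have hu2 : O.gt t u2 := by
    rcases rewAt_lhs_le (O := O) hinner hxg with rfl | h2
    · exact hxt
    · exact O.trans hxt h2
  have hbig : RewAt (Rstar E) t (Trm.app f (l ++ x' :: r)) u2 false := RewAt.congr hinner
  have hstep : Step (Rbelow O E t) t (Trm.app f (l ++ x' :: r)) :=
    ⟨u2, false, rewAt_mono hbig (fun p hp hpu => mem_rbelow hE hp (hpu ▸ hu2))⟩
  exact lhs_irred hE hr _ hstep

theorem rew_diamond : ∀ {t b c u1 u2 : Trm F V} {b1 b2 : Bool},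
    RewAt (Rstar E) t b u1 b1 → RewAt (Rstar E) t c u2 b2 →
    b = c ∨ ∃ d, Step (Rstar E) b d ∧ Step (Rstar E) c d := by
  intro t b c u1 u2 b1 b2 h1
  induction h1 generalizing c u2 b2 with
  | @root u v hr =>
    intro h2
    cases h2 with
    | root hr2 => exact Or.inl (rstar_rhs_unique hE hr hr2)
    | congr hinner => exact absurd hr (fun hr => no_inner_step hE hr hinner)
  | @congr x x' u1' b1' f l r hinner ih =>
    intro h2
    generalize hteq : (Trm.app f (l ++ x :: r) : Trm F V) = tt at h2
    cases h2 with
    | root hr2 =>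
      rw [← hteq] at hr2
      exact absurd hr2 (fun hr2 => no_inner_step hE hr2 hinner)
    | @congr y y' u2' b2' f2 l2 r2 hinner2 =>
      injection hteq with hf hl
      subst hf
      rcases list_split l x r l2 y r2 hl with ⟨rfl, rfl, rfl⟩ | ⟨mid, rfl, rfl⟩ |
        ⟨mid, rfl, rfl⟩
      · rcases ih hinner2 with rfl | ⟨d, hd1, hd2⟩
        · exact Or.inl rfl
        · exact Or.inr ⟨_, step_congr f l r hd1, step_congr f l r hd2⟩
      · refine Or.inr ⟨Trm.app f (l ++ x' :: (mid ++ y' :: r2)), ?_, ?_⟩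
        · have := step_congr (R := Rstar E) f (l ++ x' :: mid) r2 ⟨_, _, hinner2⟩
          simpa using this
        · have := step_congr (R := Rstar E) f l (mid ++ y' :: r2) ⟨_, _, hinner⟩
          simpa using this
      · refine Or.inr ⟨Trm.app f (l2 ++ y' :: (mid ++ x' :: r)), ?_, ?_⟩
        · have := step_congr (R := Rstar E) f l2 (mid ++ x' :: r) ⟨_, _, hinner2⟩
          simpa using this
        · have := step_congr (R := Rstar E) f (l2 ++ y' :: mid) r ⟨_, _, hinner⟩
          simpa using this

theorem step_diamond {t b c : Trm F V} (h1 : Step (Rstar E) t b) (h2 : Step (Rstar E) t c) :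
    b = c ∨ ∃ d, Step (Rstar E) b d ∧ Step (Rstar E) c d := by
  obtain ⟨u1, b1, h1⟩ := h1; obtain ⟨u2, b2, h2⟩ := h2
  exact rew_diamond hE h1 h2

omit hE in
theorem step_conv {R : Set (Trm F V × Trm F V)} {a b : Trm F V} (h : Step R a b) :
    Conv R a b := by
  obtain ⟨u, bb, h⟩ := h
  induction h with
  | root hr => exact Conv.rel hr
  | congr _ ih => exact Conv.congr ih

omit hE in
theorem reach_conv {R : Set (Trm F V × Trm F V)} {a b : Trm F V}
    (h : Relation.ReflTransGen (Step R) a b) : Conv R a b := by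
  induction h with
  | refl => exact Conv.refl a
  | tail _ hstep ih => exact Conv.trans ih (step_conv hstep)

omit hE in
theorem conv_mono {R R' : Set (Trm F V × Trm F V)} (hsub : R ⊆ R') {a b : Trm F V}
    (h : Conv R a b) : Conv R' a b := by
  induction h with
  | rel hr => exact Conv.rel (hsub hr)
  | refl t => exact Conv.refl t
  | symm _ ih => exact Conv.symm ih
  | trans _ _ ih1 ih2 => exact Conv.trans ih1 ih2
  | congr _ ih => exact Conv.congr ih

theorem conv_join {a b : Trm F V} (h : Conv (Rstar E) a b) :
    Relation.Join (Relation.ReflTransGen (Step (Rstar E))) a b := by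
  have hd : ∀ x y z : Trm F V, Step (Rstar E) x y → Step (Rstar E) x z →
      ∃ d, Relation.ReflGen (Step (Rstar E)) y d ∧
        Relation.ReflTransGen (Step (Rstar E)) z d := by
    intro x y z h1 h2
    rcases step_diamond hE h1 h2 with rfl | ⟨d, hd1, hd2⟩
    · exact ⟨y, Relation.ReflGen.refl, Relation.ReflTransGen.refl⟩
    · exact ⟨d, Relation.ReflGen.single hd1, Relation.ReflTransGen.single hd2⟩
  have heqv := Relation.equivalence_join_reflTransGen hd
  induction h with
  | rel hr =>
    exact ⟨_, Relation.ReflTransGen.single ⟨_, true, RewAt.root hr⟩, Relation.ReflTransGen.refl⟩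
  | refl t => exact heqv.refl t
  | symm _ ih => exact heqv.symm ih
  | trans _ _ ih1 ih2 => exact heqv.trans ih1 ih2
  | @congr u u' f l r _ ih =>
    obtain ⟨d, h1, h2⟩ := ih
    exact ⟨Trm.app f (l ++ d :: r), reach_congr f l r h1, reach_congr f l r h2⟩

theorem conv_small {s u u' : Trm F V} (hgu : u.IsGround) (hgu' : u'.IsGround)
    (hu : O.gt s u) (hu' : O.gt s u') (h : Conv (Rstar E) u u') :
    Conv (Rbelow O E s) u u' := by
  obtain ⟨d, h1, h2⟩ := conv_join hE h
  have r1 := reach_small hE h1 hgu hu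
  have r2 := reach_small hE h2 hgu' hu'
  exact Conv.trans (reach_conv r1) (Conv.symm (reach_conv r2))

end Confluence
end WJ
namespace WJ
section RMfacts
variable {F V : Type}

theorem RM_exists {O : ReductionOrdering F V} {R : Set (Trm F V × Trm F V)}
    (hR : Rules O R) {t : Trm F V} (hg : t.IsGround) (m : ℕ) : ∃ S, RM R t m S := by
  have main : ∀ t : Trm F V, t.IsGround → ∀ m, ∃ S, RM R t m S := by
    intro t
    induction (O.wf.apply t) with
    | intro t _ IH =>
      intro hg m
      by_cases hirr : Irred R t
      · exact ⟨0, RM.irred hirr⟩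
      · have : ∃ t1, Step R t t1 := by
          simp only [Irred, not_forall, not_not] at hirr; exact hirr
        obtain ⟨t1, u, b, h⟩ := this
        have hgt := rewAt_gt hR h
        have hg1 := rewAt_ground hR h hg
        obtain ⟨S, hS⟩ := IH t1 hgt hg1 m
        cases b with
        | true => exact ⟨_, RM.step_top h (Or.inl rfl) hS⟩
        | false =>
          cases m with
          | zero => exact ⟨_, RM.step_deep h hS⟩
          | succ k => exact ⟨_, RM.step_top h (Or.inr (Nat.succ_pos k)) hS⟩
  exact main t hg m

theorem rm_spec {O : ReductionOrdering F V} {R : Set (Trm F V × Trm F V)}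
    (hR : Rules O R) {t : Trm F V} (hg : t.IsGround) (m : ℕ) : RM R t m (rm R t m) := by
  rw [rm, dif_pos (RM_exists hR hg m)]
  exact (RM_exists hR hg m).choose_spec

theorem RM_irred_zero {R : Set (Trm F V × Trm F V)} {t : Trm F V} {m : ℕ}
    {S : Multiset (Trm F V × ℕ)} (h : RM R t m S) (hirr : Irred R t) : S = 0 := by
  cases h with
  | irred _ => rfl
  | step_top h _ _ => exact absurd ⟨_, _, h⟩ (hirr _)
  | step_deep h _ => exact absurd ⟨_, _, h⟩ (hirr _)

theorem rm_irred {R : Set (Trm F V × Trm F V)} {t : Trm F V} (hirr : Irred R t) (m : ℕ) :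
    rm R t m = 0 := by
  have hex : ∃ S, RM R t m S := ⟨0, RM.irred hirr⟩
  rw [rm, dif_pos hex]
  exact RM_irred_zero hex.choose_spec hirr

theorem RM_elem_le {O : ReductionOrdering F V} {R : Set (Trm F V × Trm F V)}
    (hR : Rules O R) : ∀ {t : Trm F V} {m : ℕ} {S : Multiset (Trm F V × ℕ)},
    RM R t m S → t.IsGround → ∀ p ∈ S, p.1 = t ∨ O.gt t p.1 := by
  intro t m S h
  induction h with
  | irred _ => intro _ p hp; simp at hp
  | @step_top t t' u b m S h _ _ ih =>
    intro hg p hp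
    rcases Multiset.mem_cons.1 hp with rfl | hp
    · exact rewAt_lhs_le (O := O) h hg
    · have hgt := rewAt_gt hR h
      rcases ih (rewAt_ground hR h hg) p hp with rfl | h2
      · exact Or.inr hgt
      · exact Or.inr (O.trans hgt h2)
  | @step_deep t t' u S h _ ih =>
    intro hg p hp
    rcases Multiset.mem_cons.1 hp with rfl | hp
    · exact rewAt_lhs_le (O := O) h hg
    · have hgt := rewAt_gt hR h
      rcases ih (rewAt_ground hR h hg) p hp with rfl | h2
      · exact Or.inr hgt
      · exact Or.inr (O.trans hgt h2)

variable {O : ReductionOrdering F V} {T : TieBreak F V} {N : Set (Closure F V)}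
  {E : Trm F V → Set (Trm F V × Trm F V)} (hE : IsCandidate O T N E)
  {s s' : Trm F V} (hrule : (s, s') ∈ Rstar E)
include hE hrule
set_option linter.unusedSectionVars false

theorem psub_irred {u : Trm F V} (hu : u ∈ s.psubterms) : Irred (Rstar E) u := by
  intro u2 hstep
  have hsg : s.IsGround := (rstar_rules hE _ hrule).1
  have hgu : u.IsGround := Trm.ground_of_mem_subterms s hsg u (Trm.psubterms_subset_subterms s u hu)
  have hlt : O.gt s u := gt_of_psubterm O hsg hu
  have hstep' := step_small hE hgu hlt hstep
  obtain ⟨t2, ht2⟩ := step_lift_of_subterm s u u2 (Trm.psubterms_subset_subterms s u hu) hstep'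
  exact lhs_irred hE hrule _ ht2

theorem rewAt_s {t1 u : Trm F V} {b : Bool} (h : RewAt (Rstar E) s t1 u b) :
    u = s ∧ b = true ∧ (s, t1) ∈ Rstar E := by
  cases h with
  | root hr => exact ⟨rfl, rfl, hr⟩
  | @congr x x' u' b' f l r hinner =>
    exfalso
    have hx : x ∈ (Trm.app f (l ++ x :: r)).psubterms := by
      rw [Trm.mem_psubterms_app]
      exact ⟨x, by simp, Trm.self_mem_subterms x⟩
    exact psub_irred hE hrule hx _ ⟨_, _, hinner⟩

theorem s_not_irred : ¬ Irred (Rstar E) s :=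
  fun h => h s' ⟨s, true, RewAt.root hrule⟩

theorem RM_s_shape {m : ℕ} {S : Multiset (Trm F V × ℕ)} (h : RM (Rstar E) s m S) :
    ∃ S', S = (s, m) ::ₘ S' ∧ RM (Rstar E) s' m S' := by
  cases h with
  | irred hirr => exact absurd hirr (s_not_irred hE hrule)
  | step_top h hb hS =>
    obtain ⟨rfl, -, hr⟩ := rewAt_s hE hrule h
    have := rstar_rhs_unique hE hrule hr
    exact ⟨_, rfl, this ▸ hS⟩
  | step_deep h hS =>
    obtain ⟨-, hb, -⟩ := rewAt_s hE hrule h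
    exact absurd hb (by simp)

theorem rm_s (m : ℕ) : ∃ Tl, rm (Rstar E) s m = (s, m) ::ₘ Tl ∧
    ∀ p ∈ Tl, O.gt s p.1 := by
  have hsg : s.IsGround := (rstar_rules hE _ hrule).1
  have hspec := rm_spec (rstar_rules hE) hsg m
  obtain ⟨Tl, hTl, hRM'⟩ := RM_s_shape hE hrule hspec
  refine ⟨Tl, hTl, fun p hp => ?_⟩
  have hg' : s'.IsGround := (rstar_rules hE _ hrule).2.1
  have hss' : O.gt s s' := (rstar_rules hE _ hrule).2.2
  rcases RM_elem_le (rstar_rules hE) hRM' hg' p hp with h1 | h1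
  · exact h1 ▸ hss'
  · exact O.trans hss' h1

end RMfacts
end WJ
namespace WJ
section Sets
variable {F V : Type}

theorem mem_ssN {C : Clause F V} {w : Trm F V} :
    w ∈ ssN C ↔ ∃ L ∈ C, w ∈ L.negSubs := by
  simp [ssN, Finset.mem_sup, Multiset.mem_toFinset]

theorem mem_ssPp {C : Clause F V} {w : Trm F V} :
    w ∈ ssPp C ↔ ∃ L ∈ C, w ∈ L.posPSubs := by
  simp [ssPp, Finset.mem_sup, Multiset.mem_toFinset]

theorem mem_tsP {C : Clause F V} {w : Trm F V} :
    w ∈ tsP C ↔ ∃ L ∈ C, w ∈ L.posTops := by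
  simp [tsP, Finset.mem_sup, Multiset.mem_toFinset]

theorem mem_tsN {C : Clause F V} {w : Trm F V} :
    w ∈ tsN C ↔ ∃ L ∈ C, w ∈ L.negTops := by
  simp [tsN, Finset.mem_sup, Multiset.mem_toFinset]

theorem mem_allSub {C : Clause F V} {w : Trm F V} :
    w ∈ allSub C ↔ ∃ L ∈ C, w ∈ L.allSubs := by
  simp [allSub, Finset.mem_sup, Multiset.mem_toFinset]

theorem ssN_subst {C : Clause F V} {θ : V → Trm F V} {w : Trm F V} (h : w ∈ ssN C) :
    w.subst θ ∈ ssN (Clause.subst θ C) := by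
  rw [mem_ssN] at h ⊢
  obtain ⟨L, hL, hw⟩ := h
  refine ⟨L.subst θ, Multiset.mem_map_of_mem _ hL, ?_⟩
  cases L with
  | pos a b => simp [Lit.negSubs] at hw
  | neg a b =>
    simp only [Lit.negSubs, Lit.subst, Finset.mem_union] at hw ⊢
    rcases hw with hw | hw
    · exact Or.inl (Trm.subterms_subst θ a w hw)
    · exact Or.inr (Trm.subterms_subst θ b w hw)

theorem ssPp_subst {C : Clause F V} {θ : V → Trm F V} {w : Trm F V} (h : w ∈ ssPp C) :
    w.subst θ ∈ ssPp (Clause.subst θ C) := by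
  rw [mem_ssPp] at h ⊢
  obtain ⟨L, hL, hw⟩ := h
  refine ⟨L.subst θ, Multiset.mem_map_of_mem _ hL, ?_⟩
  cases L with
  | neg a b => simp [Lit.posPSubs] at hw
  | pos a b =>
    simp only [Lit.posPSubs, Lit.subst, Finset.mem_union] at hw ⊢
    rcases hw with hw | hw
    · exact Or.inl (Trm.psubterms_subst θ a w hw)
    · exact Or.inr (Trm.psubterms_subst θ b w hw)

theorem tsN_subst {C : Clause F V} {θ : V → Trm F V} {w : Trm F V} (h : w ∈ tsN C) :
    w.subst θ ∈ tsN (Clause.subst θ C) := by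
  rw [mem_tsN] at h ⊢
  obtain ⟨L, hL, hw⟩ := h
  refine ⟨L.subst θ, Multiset.mem_map_of_mem _ hL, ?_⟩
  cases L with
  | pos a b => simp [Lit.negTops] at hw
  | neg a b =>
    simp only [Lit.negTops, Lit.subst, Finset.mem_insert, Finset.mem_singleton] at hw ⊢
    rcases hw with rfl | rfl
    · exact Or.inl rfl
    · exact Or.inr rfl

theorem tsP_subst {C : Clause F V} {θ : V → Trm F V} {w : Trm F V} (h : w ∈ tsP C) :
    w.subst θ ∈ tsP (Clause.subst θ C) := by
  rw [mem_tsP] at h ⊢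
  obtain ⟨L, hL, hw⟩ := h
  refine ⟨L.subst θ, Multiset.mem_map_of_mem _ hL, ?_⟩
  cases L with
  | neg a b => simp [Lit.posTops] at hw
  | pos a b =>
    simp only [Lit.posTops, Lit.subst, Finset.mem_insert, Finset.mem_singleton] at hw ⊢
    rcases hw with rfl | rfl
    · exact Or.inl rfl
    · exact Or.inr rfl

theorem tsN_subset_ssN {C : Clause F V} {w : Trm F V} (h : w ∈ tsN C) : w ∈ ssN C := by
  rw [mem_tsN] at h; rw [mem_ssN]
  obtain ⟨L, hL, hw⟩ := h
  refine ⟨L, hL, ?_⟩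
  cases L with
  | pos a b => simp [Lit.negTops] at hw
  | neg a b =>
    simp only [Lit.negTops, Finset.mem_insert, Finset.mem_singleton] at hw
    simp only [Lit.negSubs, Finset.mem_union]
    rcases hw with rfl | rfl
    · exact Or.inl (Trm.self_mem_subterms w)
    · exact Or.inr (Trm.self_mem_subterms w)

theorem ssN_subset_allSub {C : Clause F V} {w : Trm F V} (h : w ∈ ssN C) : w ∈ allSub C := by
  rw [mem_ssN] at h; rw [mem_allSub]
  obtain ⟨L, hL, hw⟩ := h
  refine ⟨L, hL, ?_⟩
  cases L with
  | pos a b => simp [Lit.negSubs] at hw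
  | neg a b => simpa [Lit.negSubs, Lit.allSubs] using hw

theorem ssPp_subset_allSub {C : Clause F V} {w : Trm F V} (h : w ∈ ssPp C) : w ∈ allSub C := by
  rw [mem_ssPp] at h; rw [mem_allSub]
  obtain ⟨L, hL, hw⟩ := h
  refine ⟨L, hL, ?_⟩
  cases L with
  | neg a b => simp [Lit.posPSubs] at hw
  | pos a b =>
    simp only [Lit.posPSubs, Finset.mem_union] at hw
    simp only [Lit.allSubs, Finset.mem_union]
    rcases hw with hw | hw
    · exact Or.inl (Trm.psubterms_subset_subterms a w hw)
    · exact Or.inr (Trm.psubterms_subset_subterms b w hw)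

theorem tsP_subset_allSub {C : Clause F V} {w : Trm F V} (h : w ∈ tsP C) : w ∈ allSub C := by
  rw [mem_tsP] at h; rw [mem_allSub]
  obtain ⟨L, hL, hw⟩ := h
  refine ⟨L, hL, ?_⟩
  cases L with
  | neg a b => simp [Lit.posTops] at hw
  | pos a b =>
    simp only [Lit.posTops, Finset.mem_insert, Finset.mem_singleton] at hw
    simp only [Lit.allSubs, Finset.mem_union]
    rcases hw with rfl | rfl
    · exact Or.inl (Trm.self_mem_subterms w)
    · exact Or.inr (Trm.self_mem_subterms w)

theorem allSub_ground {C : Clause F V} (hg : Clause.IsGround C) {w : Trm F V}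
    (h : w ∈ allSub C) : w.IsGround := by
  rw [mem_allSub] at h
  obtain ⟨L, hL, hw⟩ := h
  have hLg := hg L hL
  cases L with
  | pos a b =>
    simp only [Lit.allSubs, Finset.mem_union] at hw
    rcases hw with hw | hw
    · exact Trm.ground_of_mem_subterms a hLg.1 w hw
    · exact Trm.ground_of_mem_subterms b hLg.2 w hw
  | neg a b =>
    simp only [Lit.allSubs, Finset.mem_union] at hw
    rcases hw with hw | hw
    · exact Trm.ground_of_mem_subterms a hLg.1 w hw
    · exact Trm.ground_of_mem_subterms b hLg.2 w hw

theorem mem_lss {C : Clause F V} {p : Trm F V × ℕ} :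
    p ∈ lss C ↔ (p.2 = 2 ∧ p.1 ∈ ssN C) ∨ (p.2 = 1 ∧ p.1 ∈ ssPp C ∧ p.1 ∉ ssN C) ∨
      (p.2 = 0 ∧ p.1 ∈ tsP C ∧ p.1 ∉ ssPp C ∧ p.1 ∉ ssN C) := by
  obtain ⟨w, m⟩ := p
  simp only [lss, Finset.mem_union, Finset.mem_image, Finset.mem_sdiff, Prod.mk.injEq]
  constructor
  · rintro ((⟨a, ha, rfl, rfl⟩ | ⟨a, ⟨ha1, ha2⟩, rfl, rfl⟩) | ⟨a, ⟨ha1, ha2⟩, rfl, rfl⟩)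
    · exact Or.inl ⟨rfl, ha⟩
    · exact Or.inr (Or.inl ⟨rfl, ha1, ha2⟩)
    · exact Or.inr (Or.inr ⟨rfl, ha1, fun h => ha2 (Or.inl h),
        fun h => ha2 (Or.inr h)⟩)
  · rintro (⟨rfl, h⟩ | ⟨rfl, h1, h2⟩ | ⟨rfl, h1, h2, h3⟩)
    · exact Or.inl (Or.inl ⟨w, h, rfl, rfl⟩)
    · exact Or.inl (Or.inr ⟨w, ⟨h1, h2⟩, rfl, rfl⟩)
    · exact Or.inr ⟨w, ⟨h1, fun h => h.elim h2 h3⟩, rfl, rfl⟩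

theorem mem_lts {C : Clause F V} {p : Trm F V × ℕ} :
    p ∈ lts C ↔ (p.2 = 2 ∧ p.1 ∈ tsN C) ∨ (p.2 = 0 ∧ p.1 ∈ tsP C ∧ p.1 ∉ tsN C) := by
  obtain ⟨w, m⟩ := p
  simp only [lts, Finset.mem_union, Finset.mem_image, Finset.mem_sdiff, Prod.mk.injEq]
  constructor
  · rintro (⟨a, ha, rfl, rfl⟩ | ⟨a, ⟨ha1, ha2⟩, rfl, rfl⟩)
    · exact Or.inl ⟨rfl, ha⟩
    · exact Or.inr ⟨rfl, ha1, ha2⟩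
  · rintro (⟨rfl, h⟩ | ⟨rfl, h1, h2⟩)
    · exact Or.inl ⟨w, h, rfl, rfl⟩
    · exact Or.inr ⟨w, ⟨h1, h2⟩, rfl, rfl⟩

end Sets
end WJ
namespace WJ
section Decomp
variable {F V : Type}

theorem mem_finsetsum {α β : Type} {s : Finset α} {f : α → Multiset β} {x : β} :
    x ∈ s.sum f ↔ ∃ a ∈ s, x ∈ f a := by
  classical
  induction s using Finset.cons_induction with
  | empty => simp
  | cons a s ha ih => rw [Finset.sum_cons]; simp [Multiset.mem_add, ih]

theorem forall₂_map {α β : Type} {r : β → β → Prop} (g h : α → β) (l : List α)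
    (hl : ∀ u ∈ l, r (g u) (h u)) : List.Forall₂ r (l.map g) (l.map h) := by
  induction l with
  | nil => simp
  | cons a l ih =>
    simp only [List.map_cons]
    exact List.Forall₂.cons (hl a (by simp)) (ih (fun u hu => hl u (by simp [hu])))

theorem nmElt_var {R : Set (Trm F V × Trm F V)} (θ : V → Trm F V) (x : V) (m : ℕ) :
    nmElt R θ (Trm.var x, m) = rm R (θ x) m := rfl

theorem nmElt_app {R : Set (Trm F V × Trm F V)} (θ : V → Trm F V) (f : F)
    (ts : List (Trm F V)) (m : ℕ) :
    nmElt R θ (Trm.app f ts, m) = rm R (Trm.app f (ts.map fun t => nf R (t.subst θ))) m := rfl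

variable {O : ReductionOrdering F V} {T : TieBreak F V} {N : Set (Closure F V)}
  {E : Trm F V → Set (Trm F V × Trm F V)} (hE : IsCandidate O T N E)
  {s s' : Trm F V} (hrule : (s, s') ∈ Rstar E)
include hE hrule
set_option linter.unusedSectionVars false

theorem nmElt_top {θ : V → Trm F V} {w : Trm F V} (heq : w.subst θ = s) :
    nmElt (Rstar E) θ (w, 0) = rm (Rstar E) s 0 ∧ nmElt (Rbelow O E s) θ (w, 0) = 0 := by
  have hirrb : Irred (Rbelow O E s) s := lhs_irred hE hrule
  cases w with
  | var x =>
    have hx : θ x = s := by rwa [Trm.subst_var] at heq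
    rw [nmElt_var, nmElt_var, hx]
    exact ⟨rfl, rm_irred hirrb 0⟩
  | app f ts =>
    have hmap : ∀ R, R = Rstar E ∨ R = Rbelow O E s →
        ts.map (fun u => nf R (u.subst θ)) = ts.map (fun u => u.subst θ) := by
      intro R hR
      refine List.map_congr_left (fun u hu => ?_)
      have hup : u ∈ (Trm.app f ts).psubterms := by
        rw [Trm.mem_psubterms_app]; exact ⟨u, hu, Trm.self_mem_subterms u⟩
      have hups : (u.subst θ) ∈ s.psubterms := by
        have := Trm.psubterms_subst θ _ _ hup
        rwa [heq] at this
      have hirr : Irred (Rstar E) (u.subst θ) := psub_irred hE hrule hups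
      rcases hR with rfl | rfl
      · exact nf_irred hirr
      · exact nf_irred (irred_of_irred_rstar hE rbelow_subset hirr)
    have happ : Trm.app f (ts.map fun u => u.subst θ) = s := by
      rw [← Trm.subst_app]; exact heq
    constructor
    · rw [nmElt_app, hmap _ (Or.inl rfl), happ]
    · rw [nmElt_app, hmap _ (Or.inr rfl), happ]
      exact rm_irred hirrb 0

theorem nmElt_rest {θ : V → Trm F V} {w : Trm F V} (m : ℕ)
    (hgw : (w.subst θ).IsGround) (hlt : O.gt s (w.subst θ)) :
    nmElt (Rstar E) θ (w, m) = nmElt (Rbelow O E s) θ (w, m) ∧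
      ∀ q ∈ nmElt (Rstar E) θ (w, m), O.gt s q.1 := by
  have hrules := rstar_rules hE
  cases w with
  | var x =>
    rw [Trm.subst_var] at hgw hlt
    rw [nmElt_var, nmElt_var]
    refine ⟨rm_small hE hgw hlt m, fun q hq => ?_⟩
    rcases RM_elem_le hrules (rm_spec hrules hgw m) hgw q hq with h1 | h1
    · exact h1 ▸ hlt
    · exact O.trans hlt h1
  | app f ts =>
    have hsub : ∀ u ∈ ts, (u.subst θ).IsGround ∧ O.gt s (u.subst θ) := by
      intro u hu
      have hus : u ∈ (Trm.app f ts).subterms := by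
        rw [Trm.mem_subterms_app]; exact Or.inr ⟨u, hu, Trm.self_mem_subterms u⟩
      have huθ : u.subst θ ∈ ((Trm.app f ts).subst θ).subterms := Trm.subterms_subst θ _ _ hus
      have hg : (u.subst θ).IsGround := Trm.ground_of_mem_subterms _ hgw _ huθ
      refine ⟨hg, ?_⟩
      rcases ge_of_subterm O _ hgw _ huθ with h1 | h1
      · exact h1 ▸ hlt
      · exact O.trans hlt h1
    have hmapeq : ts.map (fun u => nf (Rstar E) (u.subst θ)) =
        ts.map (fun u => nf (Rbelow O E s) (u.subst θ)) := by
      refine List.map_congr_left (fun u hu => ?_)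
      exact nf_small hE (hsub u hu).1 (hsub u hu).2
    set tw := Trm.app f (ts.map fun u => nf (Rstar E) (u.subst θ)) with htw
    have hreach : Relation.ReflTransGen (Step (Rstar E)) ((Trm.app f ts).subst θ) tw := by
      rw [Trm.subst_app]
      refine reach_app f (forall₂_map _ _ ts (fun u hu => ?_))
      exact (nf_spec (exists_nf hrules (hsub u hu).1)).1
    have hgtw : tw.IsGround := reach_ground hrules hreach hgw
    have hlttw : O.gt s tw := by
      rcases reach_ge hrules hreach with h1 | h1
      · exact h1 ▸ hlt
      · exact O.trans hlt h1
    constructor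
    · rw [nmElt_app, nmElt_app, ← hmapeq]
      exact rm_small hE hgtw hlttw m
    · rw [nmElt_app]
      intro q hq
      rcases RM_elem_le hrules (rm_spec hrules hgtw m) hgtw q hq with h1 | h1
      · exact h1 ▸ hlttw
      · exact O.trans hlttw h1

theorem nm_decomp (B : Clause F V) (θ : V → Trm F V)
    (hgB : Clause.IsGround (Clause.subst θ B))
    (hmax : StrictMaxTermPos O (Clause.subst θ B) s) :
    ∃ (Rest : Multiset (Trm F V × ℕ)) (k : ℕ),
      (∀ q ∈ Rest, O.gt s q.1) ∧
      nm (Rstar E) B θ =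
        Rest + k • (rm (Rstar E) s 0) + k • ({(nf (Rstar E) s, 0)} : Multiset (Trm F V × ℕ)) ∧
      nm (Rbelow O E s) B θ = Rest + k • ({((s : Trm F V), 0)} : Multiset (Trm F V × ℕ)) := by
  classical
  obtain ⟨hmax1, hmaxN, hmaxP, hmaxT⟩ := hmax
  have hirrb : Irred (Rbelow O E s) s := lhs_irred hE hrule
  set Bθ := Clause.subst θ B with hBθ
  set A : Finset (Trm F V) := (tsP B).filter (fun w => w.subst θ = s) with hA
  -- non-top entries of lss are smaller than s
  have hlssmem : ∀ p : Trm F V × ℕ, p ∈ lss B → p.1.subst θ ≠ s →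
      (p.1.subst θ).IsGround ∧ O.gt s (p.1.subst θ) := by
    intro p hp hne
    have hall : p.1.subst θ ∈ allSub Bθ := by
      rcases mem_lss.1 hp with ⟨_, h⟩ | ⟨_, h, _⟩ | ⟨_, h, _, _⟩
      · exact ssN_subset_allSub (ssN_subst h)
      · exact ssPp_subset_allSub (ssPp_subst h)
      · exact tsP_subset_allSub (tsP_subst h)
    refine ⟨allSub_ground hgB hall, ?_⟩
    rcases hmax1 _ hall with h1 | h1
    · exact absurd h1 hne
    · exact h1
  have hltsmem : ∀ p : Trm F V × ℕ, p ∈ lts B → p.1.subst θ ≠ s →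
      (p.1.subst θ).IsGround ∧ O.gt s (p.1.subst θ) := by
    intro p hp hne
    have hall : p.1.subst θ ∈ allSub Bθ := by
      rcases mem_lts.1 hp with ⟨_, h⟩ | ⟨_, h, _⟩
      · exact ssN_subset_allSub (tsN_subset_ssN (tsN_subst h))
      · exact tsP_subset_allSub (tsP_subst h)
    refine ⟨allSub_ground hgB hall, ?_⟩
    rcases hmax1 _ hall with h1 | h1
    · exact absurd h1 hne
    · exact h1
  -- identify the filtered parts
  have hlssA : (lss B).filter (fun p => p.1.subst θ = s) = A.image (fun w => (w, 0)) := by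
    refine Finset.ext fun p => ?_
    obtain ⟨w, m⟩ := p
    rw [Finset.mem_filter, Finset.mem_image]
    constructor
    · rintro ⟨hin, heq⟩
      rcases mem_lss.1 hin with ⟨hm, h⟩ | ⟨hm, h, _⟩ | ⟨hm, h, _, _⟩
      · exact absurd (heq ▸ ssN_subst h) hmaxN
      · exact absurd (heq ▸ ssPp_subst h) hmaxP
      · have hm' : m = 0 := hm
        exact ⟨w, Finset.mem_filter.2 ⟨h, heq⟩, by rw [hm']⟩
    · rintro ⟨w', hw', heq'⟩
      injection heq' with h1 h2
      subst h2; subst h1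
      obtain ⟨hw1, hw2⟩ := Finset.mem_filter.1 hw'
      have hnP : w' ∉ ssPp B := fun h => hmaxP (hw2 ▸ ssPp_subst h)
      have hnN : w' ∉ ssN B := fun h => hmaxN (hw2 ▸ ssN_subst h)
      exact ⟨mem_lss.2 (Or.inr (Or.inr ⟨rfl, hw1, hnP, hnN⟩)), hw2⟩
  have hltsA : (lts B).filter (fun p => p.1.subst θ = s) = A.image (fun w => (w, 0)) := by
    refine Finset.ext fun p => ?_
    obtain ⟨w, m⟩ := p
    rw [Finset.mem_filter, Finset.mem_image]
    constructor
    · rintro ⟨hin, heq⟩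
      rcases mem_lts.1 hin with ⟨hm, h⟩ | ⟨hm, h, _⟩
      · exact absurd (heq ▸ tsN_subset_ssN (tsN_subst h)) hmaxN
      · have hm' : m = 0 := hm
        exact ⟨w, Finset.mem_filter.2 ⟨h, heq⟩, by rw [hm']⟩
    · rintro ⟨w', hw', heq'⟩
      injection heq' with h1 h2
      subst h2; subst h1
      obtain ⟨hw1, hw2⟩ := Finset.mem_filter.1 hw'
      have hnN : w' ∉ tsN B := fun h => hmaxN (hw2 ▸ tsN_subset_ssN (tsN_subst h))
      exact ⟨mem_lts.2 (Or.inr ⟨rfl, hw1, hnN⟩), hw2⟩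
  have hinj : ∀ x ∈ A, ∀ y ∈ A, (fun w => (w, (0:ℕ))) x = (fun w => (w, (0:ℕ))) y → x = y :=
    fun x _ y _ h => congrArg Prod.fst h
  -- the sums over the filtered parts
  have hlsssum : ∀ R, ((lss B).filter (fun p => p.1.subst θ = s)).sum (nmElt R θ) =
      A.sum (fun w => nmElt R θ (w, 0)) := by
    intro R; rw [hlssA, Finset.sum_image hinj]
  have hltssum : ∀ R, ((lts B).filter (fun p => p.1.subst θ = s)).sum
        (fun p => ({(nf R (p.1.subst θ), p.2)} : Multiset (Trm F V × ℕ))) =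
      A.sum (fun w => ({(nf R (w.subst θ), 0)} : Multiset (Trm F V × ℕ))) := by
    intro R; rw [hltsA, Finset.sum_image hinj]
  have hAs : ∀ w ∈ A, w.subst θ = s := fun w hw => (Finset.mem_filter.1 hw).2
  refine ⟨((lss B).filter (fun p => ¬ p.1.subst θ = s)).sum (nmElt (Rstar E) θ) +
      ((lts B).filter (fun p => ¬ p.1.subst θ = s)).sum
        (fun p => ({(nf (Rstar E) (p.1.subst θ), p.2)} : Multiset (Trm F V × ℕ))),
    A.card, ?_, ?_, ?_⟩
  · intro q hq
    rcases Multiset.mem_add.1 hq with hq | hq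
    · obtain ⟨p, hp, hq⟩ := mem_finsetsum.1 hq
      obtain ⟨hp1, hp2⟩ := Finset.mem_filter.1 hp
      obtain ⟨hg, hlt⟩ := hlssmem p hp1 hp2
      exact ((nmElt_rest hE hrule p.2 hg hlt).2 q (by cases p; exact hq))
    · obtain ⟨p, hp, hq⟩ := mem_finsetsum.1 hq
      obtain ⟨hp1, hp2⟩ := Finset.mem_filter.1 hp
      obtain ⟨hg, hlt⟩ := hltsmem p hp1 hp2
      rcases Multiset.mem_singleton.1 hq with rfl
      rcases nf_le (rstar_rules hE) hg (R := Rstar E) with h1 | h1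
      · simpa [h1] using hlt
      · exact O.trans hlt h1
  · -- R_* equation
    rw [nm]
    rw [← Finset.sum_filter_add_sum_filter_not (lss B) (fun p => p.1.subst θ = s),
        ← Finset.sum_filter_add_sum_filter_not (lts B) (fun p => p.1.subst θ = s)]
    rw [hlsssum, hltssum]
    have h1 : A.sum (fun w => nmElt (Rstar E) θ (w, 0)) =
        A.sum (fun _ => rm (Rstar E) s 0) :=
      Finset.sum_congr rfl (fun w hw => (nmElt_top hE hrule (hAs w hw)).1)
    have h2 : A.sum (fun w => ({(nf (Rstar E) (w.subst θ), 0)} : Multiset (Trm F V × ℕ))) =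
        A.sum (fun _ => ({(nf (Rstar E) s, 0)} : Multiset (Trm F V × ℕ))) :=
      Finset.sum_congr rfl (fun w hw => by rw [hAs w hw])
    rw [h1, h2, Finset.sum_const, Finset.sum_const]
    abel
  · -- R_s equation
    rw [nm]
    rw [← Finset.sum_filter_add_sum_filter_not (lss B) (fun p => p.1.subst θ = s),
        ← Finset.sum_filter_add_sum_filter_not (lts B) (fun p => p.1.subst θ = s)]
    rw [hlsssum, hltssum]
    have h1 : A.sum (fun w => nmElt (Rbelow O E s) θ (w, 0)) =
        A.sum (fun _ => (0 : Multiset (Trm F V × ℕ))) :=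
      Finset.sum_congr rfl (fun w hw => (nmElt_top hE hrule (hAs w hw)).2)
    have h2 : A.sum (fun w => ({(nf (Rbelow O E s) (w.subst θ), 0)} : Multiset (Trm F V × ℕ))) =
        A.sum (fun _ => ({((s : Trm F V), 0)} : Multiset (Trm F V × ℕ))) :=
      Finset.sum_congr rfl (fun w hw => by rw [hAs w hw, nf_irred hirrb])
    rw [h1, h2, Finset.sum_const, Finset.sum_const, smul_zero]
    have hrest1 : ((lss B).filter (fun p => ¬ p.1.subst θ = s)).sum (nmElt (Rbelow O E s) θ) =
        ((lss B).filter (fun p => ¬ p.1.subst θ = s)).sum (nmElt (Rstar E) θ) := by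
      refine Finset.sum_congr rfl (fun p hp => ?_)
      obtain ⟨hp1, hp2⟩ := Finset.mem_filter.1 hp
      obtain ⟨hg, hlt⟩ := hlssmem p hp1 hp2
      exact (by cases p; exact ((nmElt_rest hE hrule _ hg hlt).1).symm)
    have hrest2 : ((lts B).filter (fun p => ¬ p.1.subst θ = s)).sum
          (fun p => ({(nf (Rbelow O E s) (p.1.subst θ), p.2)} : Multiset (Trm F V × ℕ))) =
        ((lts B).filter (fun p => ¬ p.1.subst θ = s)).sum
          (fun p => ({(nf (Rstar E) (p.1.subst θ), p.2)} : Multiset (Trm F V × ℕ))) := by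
      refine Finset.sum_congr rfl (fun p hp => ?_)
      obtain ⟨hp1, hp2⟩ := Finset.mem_filter.1 hp
      obtain ⟨hg, hlt⟩ := hltsmem p hp1 hp2
      rw [nf_small hE hg hlt]
    rw [hrest1, hrest2]
    abel

end Decomp
end WJ
namespace WJ
section Mult
variable {F V : Type}

theorem lexGT_trans (O : ReductionOrdering F V) : Transitive (lexGT O) := by
  rintro p q u (h1 | ⟨h1, h1'⟩) (h2 | ⟨h2, h2'⟩)
  · exact Or.inl (O.trans h1 h2)
  · exact Or.inl (h2 ▸ h1)
  · exact Or.inl (h1 ▸ h2)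
  · exact Or.inr ⟨h1.trans h2, h2'.trans h1'⟩

theorem multGT_of_dom {α : Type} {r : α → α → Prop} {M N : Multiset α} (hne : M ≠ 0)
    (h : ∀ y ∈ N, ∃ x ∈ M, r x y) : MultGT r M N :=
  ⟨M, N, 0, (zero_add M).symm, (zero_add N).symm, hne, h⟩

theorem count_nsmul_singleton {α : Type} [DecidableEq α] (a : α) (k : ℕ) :
    Multiset.count a (k • ({a} : Multiset α)) = k := by
  rw [Multiset.count_nsmul, Multiset.count_singleton, if_pos rfl, mul_one]

theorem multGT_graft {α : Type} [DecidableEq α] {r : α → α → Prop} (htr : Transitive r)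
    {a : α} {E0 P Q : Multiset α} (hE0 : ∀ e ∈ E0, r a e) (hPa : a ∉ P) (hQa : a ∉ Q)
    {k m : ℕ} (h : MultGT r (P + k • ({a} : Multiset α)) (Q + m • ({a} : Multiset α))) :
    MultGT r (P + k • (({a} : Multiset α) + E0)) (Q + m • (({a} : Multiset α) + E0)) := by
  obtain ⟨X, Y, Z, hM, hN, hX, hdom⟩ := h
  rw [smul_add, smul_add, ← add_assoc, ← add_assoc]
  by_cases hkm : m ≤ k
  · refine ⟨X + (k - m) • E0, Y, Z + m • E0, ?_, ?_, ?_, ?_⟩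
    · have hk : k • E0 = m • E0 + (k - m) • E0 := by
        rw [← add_nsmul]; congr 1; omega
      calc P + k • ({a} : Multiset α) + k • E0 = Z + X + (m • E0 + (k - m) • E0) := by
            rw [← hM, hk]
        _ = Z + m • E0 + (X + (k - m) • E0) := by abel
    · calc Q + m • ({a} : Multiset α) + m • E0 = Z + Y + m • E0 := by rw [← hN]
        _ = Z + m • E0 + Y := by abel
    · intro h0
      apply hX
      have : X ≤ X + (k - m) • E0 := Multiset.le_add_right _ _
      rw [h0] at this
      exact Multiset.le_zero.1 this
    · intro y hy
      obtain ⟨x, hx, hr⟩ := hdom y hy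
      exact ⟨x, Multiset.mem_add.2 (Or.inl hx), hr⟩
  · push_neg at hkm
    have haY : a ∈ Y := by
      rw [← Multiset.count_pos]
      have hNc : Multiset.count a (Q + m • ({a} : Multiset α)) = m := by
        rw [Multiset.count_add, Multiset.count_eq_zero.2 hQa, count_nsmul_singleton, zero_add]
      have hMc : Multiset.count a (P + k • ({a} : Multiset α)) = k := by
        rw [Multiset.count_add, Multiset.count_eq_zero.2 hPa, count_nsmul_singleton, zero_add]
      have hZle : Multiset.count a Z ≤ k := by
        rw [← hMc, hM]
        exact Multiset.count_le_of_le a (Multiset.le_add_right _ _)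
      have : Multiset.count a Z + Multiset.count a Y = m := by
        rw [← Multiset.count_add, ← hN, hNc]
      omega
    obtain ⟨x0, hx0, hrx0⟩ := hdom a haY
    refine ⟨X, Y + (m - k) • E0, Z + k • E0, ?_, ?_, hX, ?_⟩
    · calc P + k • ({a} : Multiset α) + k • E0 = Z + X + k • E0 := by rw [← hM]
        _ = Z + k • E0 + X := by abel
    · have hm : m • E0 = k • E0 + (m - k) • E0 := by
        rw [← add_nsmul]; congr 1; omega
      calc Q + m • ({a} : Multiset α) + m • E0 = Z + Y + (k • E0 + (m - k) • E0) := by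
            rw [← hN, hm]
        _ = Z + k • E0 + (Y + (m - k) • E0) := by abel
    · intro y hy
      rcases Multiset.mem_add.1 hy with hy | hy
      · exact hdom y hy
      · have hyE : y ∈ E0 := by
          have := Multiset.mem_nsmul.1 hy
          exact this.2
        exact ⟨x0, hx0, htr hrx0 (hE0 y hyE)⟩

theorem cancel_decomp {α : Type} [DecidableEq α] {a : α} {P Q : Multiset α} {k m : ℕ}
    (hPa : a ∉ P) (hQa : a ∉ Q)
    (h : P + k • ({a} : Multiset α) = Q + m • ({a} : Multiset α)) : k = m ∧ P = Q := by
  have hk : k = m := by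
    have := congrArg (Multiset.count a) h
    rwa [Multiset.count_add, Multiset.count_add, Multiset.count_eq_zero.2 hPa,
      Multiset.count_eq_zero.2 hQa, count_nsmul_singleton, count_nsmul_singleton,
      zero_add, zero_add] at this
  subst hk
  exact ⟨rfl, add_right_cancel h⟩

end Mult
end WJ
namespace WJ
section SMax
variable {F V : Type} (O : ReductionOrdering F V)

theorem litGT_dom_fst {u s v : Trm F V} (hus : O.gt u s) (hsv : O.gt s v)
    {L : Lit F V} (hL : u ∈ L.mset) : litGT O L (Lit.pos s v) := by
  refine multGT_of_dom ?_ ?_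
  · intro h0; rw [h0] at hL; exact absurd hL (Multiset.notMem_zero u)
  · intro y hy
    have : y = s ∨ y = v := by
      have : Lit.mset (Lit.pos s v) = {s, v} := rfl
      rw [this] at hy
      rcases Multiset.mem_cons.1 hy with h | h
      · exact Or.inl h
      · exact Or.inr (Multiset.mem_singleton.1 h)
    rcases this with rfl | rfl
    · exact ⟨u, hL, hus⟩
    · exact ⟨u, hL, O.trans hus hsv⟩

theorem litGT_neg_top {u u' s v : Trm F V} (hsv : O.gt s v) (hs : u = s ∨ u' = s) :
    litGT O (Lit.neg u u') (Lit.pos s v) := by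
  set M : Multiset (Trm F V) := (Lit.neg u u').mset with hMdef
  have hM2 : M = {u, u, u', u'} := rfl
  have hcount : 2 ≤ Multiset.count s M := by
    rcases hs with rfl | rfl <;> simp [hM2, Multiset.count_cons] <;> split_ifs <;> omega
  have hmem : s ∈ M := by
    rw [← Multiset.count_pos]; omega
  have hmem' : s ∈ M.erase s := by
    rw [← Multiset.count_pos, Multiset.count_erase_self]; omega
  refine ⟨M.erase s, {v}, {s}, ?_, ?_, ?_, ?_⟩
  · rw [Multiset.singleton_add, Multiset.cons_erase hmem]
  · rfl
  · intro h0; rw [h0] at hmem'; exact absurd hmem' (Multiset.notMem_zero s)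
  · intro y hy
    rcases Multiset.mem_singleton.1 hy with rfl
    exact ⟨s, hmem', hsv⟩

variable {O}

theorem occ_bounds {Cg : Clause F V} {s v : Trm F V} (hg : Clause.IsGround Cg)
    (hL : Lit.pos s v ∈ Cg) (hsv : O.gt s v)
    (hmax : MaxIn O (Lit.pos s v) (Cg.erase (Lit.pos s v))) :
    ∀ L' ∈ Cg, (∀ u u', L' = Lit.pos u u' → (u = s ∨ O.gt s u) ∧ (u' = s ∨ O.gt s u')) ∧
      (∀ u u', L' = Lit.neg u u' → O.gt s u ∧ O.gt s u') := by
  have hsg : s.IsGround := (hg _ hL).1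
  intro L' hL'
  by_cases hLeq : L' = Lit.pos s v
  · subst hLeq
    constructor
    · rintro u u' heq
      injection heq with h1 h2
      subst h1; subst h2
      exact ⟨Or.inl rfl, Or.inr hsv⟩
    · rintro u u' heq; cases heq
  · have hL'e : L' ∈ Cg.erase (Lit.pos s v) := (Multiset.mem_erase_of_ne hLeq).2 hL'
    have hnGT : ¬ litGT O L' (Lit.pos s v) := hmax L' hL'e
    have hgL' := hg L' hL'
    constructor
    · rintro u u' rfl
      have hgu : u.IsGround := hgL'.1
      have hgu' : u'.IsGround := hgL'.2
      constructor
      · by_contra hne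
        push_neg at hne
        obtain ⟨h1, h2⟩ := hne
        rcases O.total_ground hgu hsg h1 with h3 | h3
        · exact hnGT (litGT_dom_fst O h3 hsv (by simp [Lit.mset]))
        · exact h2 h3
      · by_contra hne
        push_neg at hne
        obtain ⟨h1, h2⟩ := hne
        rcases O.total_ground hgu' hsg h1 with h3 | h3
        · exact hnGT (litGT_dom_fst O h3 hsv (by simp [Lit.mset]))
        · exact h2 h3
    · rintro u u' rfl
      have hgu : u.IsGround := hgL'.1
      have hgu' : u'.IsGround := hgL'.2
      constructor
      · by_contra h1
        by_cases h2 : u = s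
        · exact hnGT (litGT_neg_top O hsv (Or.inl h2))
        · rcases O.total_ground hgu hsg h2 with h3 | h3
          · exact hnGT (litGT_dom_fst O h3 hsv (by simp [Lit.mset]))
          · exact h1 h3
      · by_contra h1
        by_cases h2 : u' = s
        · exact hnGT (litGT_neg_top O hsv (Or.inr h2))
        · rcases O.total_ground hgu' hsg h2 with h3 | h3
          · exact hnGT (litGT_dom_fst O h3 hsv (by simp [Lit.mset]))
          · exact h1 h3

theorem smax_of_occ {Cg : Clause F V} {s v : Trm F V} (hg : Clause.IsGround Cg)
    (hL : Lit.pos s v ∈ Cg) (hsv : O.gt s v)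
    (hmax : MaxIn O (Lit.pos s v) (Cg.erase (Lit.pos s v))) :
    StrictMaxTermPos O Cg s := by
  have hb := occ_bounds hg hL hsv hmax
  refine ⟨?_, ?_, ?_, ?_⟩
  · intro w hw
    rw [mem_allSub] at hw
    obtain ⟨L, hLm, hwL⟩ := hw
    have hgL := hg L hLm
    cases L with
    | pos a b =>
      have hab := (hb _ hLm).1 a b rfl
      simp only [Lit.allSubs, Finset.mem_union] at hwL
      rcases hwL with hwL | hwL
      · rcases ge_of_subterm O a hgL.1 w hwL with rfl | h2
        · exact hab.1
        · rcases hab.1 with rfl | h3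
          · exact Or.inr h2
          · exact Or.inr (O.trans h3 h2)
      · rcases ge_of_subterm O b hgL.2 w hwL with rfl | h2
        · exact hab.2
        · rcases hab.2 with rfl | h3
          · exact Or.inr h2
          · exact Or.inr (O.trans h3 h2)
    | neg a b =>
      have hab := (hb _ hLm).2 a b rfl
      simp only [Lit.allSubs, Finset.mem_union] at hwL
      rcases hwL with hwL | hwL
      · rcases ge_of_subterm O a hgL.1 w hwL with rfl | h2
        · exact Or.inr hab.1
        · exact Or.inr (O.trans hab.1 h2)
      · rcases ge_of_subterm O b hgL.2 w hwL with rfl | h2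
        · exact Or.inr hab.2
        · exact Or.inr (O.trans hab.2 h2)
  · intro hs
    rw [mem_ssN] at hs
    obtain ⟨L, hLm, hsL⟩ := hs
    have hgL := hg L hLm
    cases L with
    | pos a b => simp [Lit.negSubs] at hsL
    | neg a b =>
      have hab := (hb _ hLm).2 a b rfl
      simp only [Lit.negSubs, Finset.mem_union] at hsL
      rcases hsL with hsL | hsL
      · rcases ge_of_subterm O a hgL.1 s hsL with heq | h2
        · exact gt_irrefl O a (heq ▸ hab.1)
        · exact gt_irrefl O s (O.trans hab.1 h2)
      · rcases ge_of_subterm O b hgL.2 s hsL with heq | h2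
        · exact gt_irrefl O b (heq ▸ hab.2)
        · exact gt_irrefl O s (O.trans hab.2 h2)
  · intro hs
    rw [mem_ssPp] at hs
    obtain ⟨L, hLm, hsL⟩ := hs
    have hgL := hg L hLm
    cases L with
    | neg a b => simp [Lit.posPSubs] at hsL
    | pos a b =>
      have hab := (hb _ hLm).1 a b rfl
      simp only [Lit.posPSubs, Finset.mem_union] at hsL
      rcases hsL with hsL | hsL
      · have h2 := gt_of_psubterm O hgL.1 hsL
        rcases hab.1 with heq | h3
        · exact gt_irrefl O a (heq ▸ h2)
        · exact gt_irrefl O s (O.trans h3 h2)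
      · have h2 := gt_of_psubterm O hgL.2 hsL
        rcases hab.2 with heq | h3
        · exact gt_irrefl O b (heq ▸ h2)
        · exact gt_irrefl O s (O.trans h3 h2)
  · rw [mem_tsP]
    exact ⟨Lit.pos s v, hL, by simp [Lit.posTops]⟩

end SMax
end WJ

/-- Lemma 10: if `(D·θ) = (D' ∨ t ≈ t' · θ)` produces the rule
`tθ → t'θ` of `R_*`, `tθ` occurs in `Cθ` at the top of the strictly maximal side of
a positive maximal literal, and `R_* ⊭ (C·θ)`, then `(D·θ) ≪_{R_*} (C·θ)`. -/
theorem productive_smaller_pos_top {F V : Type} (O : ReductionOrdering F V)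
    (T : TieBreak F V) (N : Set (Closure F V))
    (E : Trm F V → Set (Trm F V × Trm F V)) (hE : IsCandidate O T N E)
    (D' C : Clause F V) (t t' : Trm F V) (θ : V → Trm F V)
    (hC : (C, θ) ∈ N) (hgC : Closure.IsGround (C, θ))
    (hprod : ProducesRule O T N E D' t t' θ)
    (hocc : ∃ v : Trm F V, Lit.pos (t.subst θ) v ∈ Clause.subst θ C ∧
        O.gt (t.subst θ) v ∧
        MaxIn O (Lit.pos (t.subst θ) v) ((Clause.subst θ C).erase (Lit.pos (t.subst θ) v)))
    (hfalse : ¬ Models (Rstar E) (C, θ)) :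
    cloGT O T (Rstar E) (C, θ) (D' + {Lit.pos t t'}, θ) := by
  classical
  open WJ in
  obtain ⟨hPF, hEs⟩ := hprod
  set s : Trm F V := t.subst θ with hsdef
  set s2 : Trm F V := t'.subst θ with hs2def
  have hrule : (s, s2) ∈ Rstar E := ⟨s, by rw [hEs]; rfl⟩
  obtain ⟨v, hvmem, hsv, hvmax⟩ := hocc
  have hgC' : Clause.IsGround (Clause.subst θ C) := hgC
  have hsmaxC : StrictMaxTermPos O (Clause.subst θ C) s := smax_of_occ hgC' hvmem hsv hvmax
  have hbounds := occ_bounds hgC' hvmem hsv hvmax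
  obtain ⟨L, hLC, hLeq⟩ := Multiset.mem_map.1 hvmem
  cases L with
  | neg a b => exact absurd hLeq (by simp [Lit.subst])
  | pos a b =>
  simp only [Lit.subst] at hLeq
  injection hLeq with ha hb
  have hCeq : C.erase (Lit.pos a b) + {Lit.pos a b} = C := by
    rw [add_comm, Multiset.singleton_add, Multiset.cons_erase hLC]
  have hCpair : ((C.erase (Lit.pos a b) + {Lit.pos a b}, θ) : Closure F V) = (C, θ) := by
    rw [hCeq]
  have hPC0 : ProdConds O N (Rbelow O E s) D' t t' θ := hPF.2.1
  have hirrs : Irred (Rbelow O E s) s := lhs_irred hE hrule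
  have hnModels : ¬ Models (Rbelow O E s) (C, θ) := by
    rintro ⟨Lw, hLw, htrue⟩
    cases Lw with
    | pos p q => exact hfalse ⟨Lit.pos p q, hLw, conv_mono rbelow_subset htrue⟩
    | neg p q =>
      have hconv : Conv (Rstar E) p q := by
        by_contra hnc
        exact hfalse ⟨Lit.neg p q, hLw, hnc⟩
      have hpq := (hbounds _ hLw).2 p q rfl
      have hgpq := hgC' _ hLw
      exact htrue (conv_small hE hgpq.1 hgpq.2 hpq.1 hpq.2 hconv)
  have hPCC : ProdConds O N (Rbelow O E s) (C.erase (Lit.pos a b)) a b θ := by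
    refine ⟨?_, ?_, ?_, ?_, ?_, ?_⟩
    · rw [hCpair]; exact hC
    · show Closure.IsGround _
      rw [hCpair]; exact hgC
    · show StrictMaxTermPos O (Clause.subst θ (C.erase (Lit.pos a b) + {Lit.pos a b}))
        (a.subst θ)
      rw [hCeq, ha]; exact hsmaxC
    · rw [ha]; exact hirrs
    · rw [hCpair]; exact hnModels
    · rw [ha, hb]; exact hsv
  have hmin := hPF.2.2 (C.erase (Lit.pos a b)) a b θ ha hPCC
  rcases hmin with heqD | hlt
  · exfalso
    apply hfalse
    have hCD : ((C, θ) : Closure F V) = (D' + {Lit.pos t t'}, θ) := hCpair.symm.trans heqD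
    rw [hCD]
    refine ⟨Lit.subst θ (Lit.pos t t'), Multiset.mem_map_of_mem _ (by simp), ?_⟩
    simp only [Lit.subst, litTrue]
    exact Conv.rel hrule
  · rw [hCpair] at hlt
    have hgD : Closure.IsGround (D' + {Lit.pos t t'}, θ) := hPC0.2.1
    have hsmaxD : StrictMaxTermPos O (Clause.subst θ (D' + {Lit.pos t t'})) s := hPC0.2.2.1
    obtain ⟨RestC, kC, hbC, hC1, hC2⟩ := nm_decomp hE hrule C θ hgC' hsmaxC
    obtain ⟨RestD, kD, hbD, hD1, hD2⟩ :=
      nm_decomp hE hrule (D' + {Lit.pos t t'}) θ hgD hsmaxD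
    have haC : ((s, 0) : Trm F V × ℕ) ∉ RestC := fun h => gt_irrefl O s (hbC _ h)
    have haD : ((s, 0) : Trm F V × ℕ) ∉ RestD := fun h => gt_irrefl O s (hbD _ h)
    obtain ⟨Tl, hTl, hTlb⟩ := rm_s hE hrule 0
    have hsg : s.IsGround := (rstar_rules hE _ hrule).1
    have hnfs : O.gt s (nf (Rstar E) s) :=
      nf_gt_of_red (rstar_rules hE) hsg (s_not_irred hE hrule)
    set E0 : Multiset (Trm F V × ℕ) := Tl + {(nf (Rstar E) s, 0)} with hE0def
    have hE0 : ∀ e ∈ E0, lexGT O (s, 0) e := by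
      intro e he
      rcases Multiset.mem_add.1 he with he | he
      · exact Or.inl (hTlb e he)
      · rcases Multiset.mem_singleton.1 he with rfl
        exact Or.inl hnfs
    have hsplit : ({((s : Trm F V), 0)} : Multiset (Trm F V × ℕ)) + E0 =
        rm (Rstar E) s 0 + {(nf (Rstar E) s, 0)} := by
      rw [hE0def, hTl, Multiset.singleton_add, Multiset.cons_add]
    have hC1' : nm (Rstar E) C θ =
        RestC + kC • (rm (Rstar E) s 0 + ({(nf (Rstar E) s, 0)} : Multiset (Trm F V × ℕ))) := by
      rw [hC1, smul_add, add_assoc]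
    have hD1' : nm (Rstar E) (D' + {Lit.pos t t'}) θ =
        RestD + kD • (rm (Rstar E) s 0 + ({(nf (Rstar E) s, 0)} : Multiset (Trm F V × ℕ))) := by
      rw [hD1, smul_add, add_assoc]
    rcases hlt with hmult | ⟨heqnm, hrest⟩ | ⟨heqnm, hrest⟩
    · left
      have hmult0 : MultGT (lexGT O) (nm (Rbelow O E s) C θ)
          (nm (Rbelow O E s) (D' + {Lit.pos t t'}) θ) := hmult
      rw [hC2, hD2] at hmult0
      have hgraft := multGT_graft (lexGT_trans O) hE0 haC haD hmult0
      rw [hsplit] at hgraft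
      show MultGT (lexGT O) (nm (Rstar E) C θ) (nm (Rstar E) (D' + {Lit.pos t t'}) θ)
      rw [hC1', hD1']
      exact hgraft
    · have heqnm0 : nm (Rbelow O E s) C θ = nm (Rbelow O E s) (D' + {Lit.pos t t'}) θ := heqnm
      rw [hC2, hD2] at heqnm0
      obtain ⟨hk, hR⟩ := cancel_decomp haC haD heqnm0
      refine Or.inr (Or.inl ⟨?_, hrest⟩)
      show nm (Rstar E) C θ = nm (Rstar E) (D' + {Lit.pos t t'}) θ
      rw [hC1', hD1', hk, hR]
    · have heqnm0 : nm (Rbelow O E s) C θ = nm (Rbelow O E s) (D' + {Lit.pos t t'}) θ := heqnm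
      rw [hC2, hD2] at heqnm0
      obtain ⟨hk, hR⟩ := cancel_decomp haC haD heqnm0
      refine Or.inr (Or.inr ⟨?_, hrest⟩)
      show nm (Rstar E) C θ = nm (Rstar E) (D' + {Lit.pos t t'}) θ
      rw [hC1', hD1', hk, hR]
end
end

section
/- Let N be a set of Horn clauses and let G(N) be the set of all ground closures (C·θ) with C ∈ N. Then every inference of the Ground Closure Horn Superposition Calculus whose premises lie in G(N) is either a ground instance of an inference of the (non-ground) Horn Superposition Calculus with Parallel Superposition from clauses of N, or is contained in Red_I(G(N)). -/
/- Common infrastructure: first-order terms, clauses, ground rewrite systems,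
   reduction orderings, the (Horn and non-Horn) R-normalization closure orderings,
   the Ground Closure (Horn) Superposition Calculus and its redundancy criterion,
   and the candidate interpretation construction, following Waldmann,
   "On the (In-)Completeness of Destructive Equality Resolution in the
   Superposition Calculus". -/

set_option autoImplicit false
set_option maxHeartbeats 1000000

noncomputable section

variable {F V : Type}

theorem Trm.ind {F V : Type} {P : Trm F V → Prop} (hv : ∀ x, P (.var x))
    (ha : ∀ f ts, (∀ t ∈ ts, P t) → P (.app f ts)) : ∀ t, P t
  | .var x => hv x
  | .app f ts => ha f ts (fun t _ => Trm.ind hv ha t)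
decreasing_by
  have := List.sizeOf_lt_of_mem ‹t ∈ ts›
  simp only [Trm.app.sizeOf_spec]; omega

theorem Trm.subst_var {F V : Type} (θ : V → Trm F V) (x : V) : (Trm.var x).subst θ = θ x := by
  simp [Trm.subst]

theorem Trm.subst_app {F V : Type} (θ : V → Trm F V) (f : F) (ts : List (Trm F V)) :
    (Trm.app f ts).subst θ = .app f (ts.map (fun t => t.subst θ)) := by
  rw [Trm.subst]
  congr 1
  exact List.attach_map_val

theorem Trm.subst_subst {F V : Type} (σ τ : V → Trm F V) (t : Trm F V) :
    (t.subst σ).subst τ = t.subst (fun x => (σ x).subst τ) := by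
  induction t using Trm.ind with
  | hv x => simp [Trm.subst_var]
  | ha f ts ih => simp only [Trm.subst_app, List.map_map]; congr 1; exact List.map_congr_left fun t ht => ih t ht
section MultLemmas
variable {α : Type*} {r : α → α → Prop}

open Relation in
theorem multGT_transGen_aux :
    ∀ (X : Multiset α), X ≠ 0 → ∀ (Y Z : Multiset α), (∀ y ∈ Y, ∃ x ∈ X, r x y) →
      Relation.TransGen (CutExpand (fun a b => r b a)) (Z + Y) (Z + X) := by
  classical
  intro X
  induction X using Multiset.induction with
  | empty => intro h; exact absurd rfl h
  | cons a X' ih =>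
    intro _ Y Z hdom
    by_cases hX' : X' = 0
    · subst hX'
      refine Relation.TransGen.single ⟨Y, a, fun y hy => ?_, ?_⟩
      · obtain ⟨x, hx, hr⟩ := hdom y hy
        simp only [Multiset.mem_cons, Multiset.notMem_zero, or_false] at hx
        rwa [hx] at hr
      · show Z + Y + {a} = Z + (a ::ₘ 0) + Y
        rw [← Multiset.singleton_add]
        simp [add_comm, add_assoc, add_left_comm]
    · set Ya := Y.filter (fun y => r a y) with hYa
      set Yr := Y.filter (fun y => ¬ r a y) with hYr
      have hsplit : Ya + Yr = Y := Multiset.filter_add_not _ _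
      have h1 : Relation.TransGen (CutExpand (fun a b => r b a)) ((Z + Ya) + Yr) ((Z + Ya) + X') := by
        refine ih hX' Yr (Z + Ya) ?_
        intro y hy
        have hy' : y ∈ Y ∧ ¬ r a y := by
          simpa [hYr, Multiset.mem_filter] using hy
        obtain ⟨x, hx, hr⟩ := hdom y hy'.1
        rcases Multiset.mem_cons.1 hx with rfl | hx'
        · exact absurd hr hy'.2
        · exact ⟨x, hx', hr⟩
      have h2 : CutExpand (fun a b => r b a) ((Z + Ya) + X') (Z + (a ::ₘ X')) := by
        refine ⟨Ya, a, fun y hy => ?_, ?_⟩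
        · exact (Multiset.mem_filter.1 hy).2
        · show Z + Ya + X' + {a} = Z + (a ::ₘ X') + Ya
          rw [← Multiset.singleton_add]
          simp [add_comm, add_assoc, add_left_comm]
      have := Relation.TransGen.tail h1 h2
      rwa [add_assoc, hsplit] at this
end MultLemmas
section MultLemmas2
variable {α β : Type} {r : α → α → Prop}

theorem wf_multGT (hwf : WellFounded (fun a b => r b a)) :
    WellFounded (fun M N : Multiset α => MultGT r N M) := by
  have hsub : Subrelation (fun M N : Multiset α => MultGT r N M)
      (Relation.TransGen (Relation.CutExpand (fun a b => r b a))) := by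
    rintro M N ⟨X, Y, Z, h1, h2, h3, h4⟩
    rw [h1, h2]
    exact multGT_transGen_aux X h3 Y Z h4
  exact Subrelation.wf hsub hwf.cutExpand.transGen

theorem wf_asymm {γ : Type*} {q : γ → γ → Prop} (h : WellFounded q) :
    ∀ a b, q a b → q b a → False := by
  intro a
  induction a using WellFounded.induction h with
  | _ a ih => exact fun b hab hba => ih b hba a hba hab

theorem multGT_asymm (hwf : WellFounded (fun a b => r b a)) {M N : Multiset α} :
    MultGT r M N → MultGT r N M → False :=
  fun h1 h2 => wf_asymm (wf_multGT hwf) N M h1 h2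

theorem multGT_irrefl (hwf : WellFounded (fun a b => r b a)) {M : Multiset α} :
    ¬ MultGT r M M := fun h => multGT_asymm hwf h h

theorem multGT_map {f : α → β} {q : β → β → Prop} (hf : ∀ a b, r a b → q (f a) (f b))
    {M N : Multiset α} (h : MultGT r M N) : MultGT q (M.map f) (N.map f) := by
  obtain ⟨X, Y, Z, h1, h2, h3, h4⟩ := h
  refine ⟨X.map f, Y.map f, Z.map f, by rw [h1, Multiset.map_add], by rw [h2, Multiset.map_add],
    by simpa using h3, ?_⟩
  intro y hy
  obtain ⟨y0, hy0, rfl⟩ := Multiset.mem_map.1 hy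
  obtain ⟨x, hx, hr⟩ := h4 y0 hy0
  exact ⟨f x, Multiset.mem_map_of_mem f hx, hf _ _ hr⟩

theorem multGT_of_add {E M : Multiset α} (hE : E ≠ 0) : MultGT r (M + E) M :=
  ⟨E, 0, M, rfl, (add_zero M).symm, hE, by simp⟩

end MultLemmas2

section OrderLemmas
variable {F V : Type} (O : ReductionOrdering F V)

theorem Ogt_irrefl (t : Trm F V) : ¬ O.gt t t := fun h => wf_asymm O.wf t t h h

theorem Ogt_asymm {s t : Trm F V} : O.gt s t → O.gt t s → False := fun h h' => wf_asymm O.wf _ _ h h'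

theorem wf_litGT : WellFounded (fun L L' : Lit F V => litGT O L' L) := by
  have := wf_multGT (r := O.gt) O.wf
  exact Subrelation.wf (fun {L L'} h => h) (InvImage.wf Lit.mset this)

theorem litGT_asymm {L L' : Lit F V} : litGT O L L' → litGT O L' L → False :=
  fun h h' => wf_asymm (wf_litGT O) _ _ h h'

theorem clauseGT_asymm {C D : Clause F V} : clauseGT O C D → clauseGT O D C → False :=
  fun h h' => multGT_asymm (wf_litGT O) h h'

theorem clauseGT_irrefl (C : Clause F V) : ¬ clauseGT O C C :=
  multGT_irrefl (wf_litGT O)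

theorem Lit.mset_subst (τ : V → Trm F V) (L : Lit F V) :
    (L.subst τ).mset = L.mset.map (fun t => t.subst τ) := by
  cases L <;> simp [Lit.subst, Lit.mset]

theorem litGT_subst {τ : V → Trm F V} {L L' : Lit F V} (h : litGT O L L') :
    litGT O (L.subst τ) (L'.subst τ) := by
  unfold litGT at *
  rw [Lit.mset_subst, Lit.mset_subst]
  exact multGT_map (fun a b hab => O.compat_subst τ hab) h

theorem clauseGT_subst {τ : V → Trm F V} {C D : Clause F V} (h : clauseGT O C D) :
    clauseGT O (Clause.subst τ C) (Clause.subst τ D) :=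
  multGT_map (fun a b hab => litGT_subst O hab) h

end OrderLemmas
section Rewriting
variable {F V : Type} {R : Set (Trm F V × Trm F V)}

theorem list_split {α : Type*} : ∀ (l₁ : List α) (a : α) (r₁ l₂ : List α) (b : α) (r₂ : List α),
    l₁ ++ a :: r₁ = l₂ ++ b :: r₂ →
    (l₁ = l₂ ∧ a = b ∧ r₁ = r₂) ∨
    (∃ m, l₂ = l₁ ++ a :: m ∧ r₁ = m ++ b :: r₂) ∨
    (∃ m, l₁ = l₂ ++ b :: m ∧ r₂ = m ++ a :: r₁) := by
  intro l₁
  induction l₁ with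
  | nil =>
    intro a r₁ l₂ b r₂ h
    cases l₂ with
    | nil =>
      simp only [List.nil_append, List.cons.injEq] at h
      exact Or.inl ⟨rfl, h.1, h.2⟩
    | cons c l₂' =>
      simp only [List.nil_append, List.cons_append, List.cons.injEq] at h
      exact Or.inr (Or.inl ⟨l₂', by simp [h.1], h.2⟩)
  | cons c l₁' ih =>
    intro a r₁ l₂ b r₂ h
    cases l₂ with
    | nil =>
      simp only [List.cons_append, List.nil_append, List.cons.injEq] at h
      exact Or.inr (Or.inr ⟨l₁', by simp [h.1], h.2.symm⟩)
    | cons d l₂' =>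
      simp only [List.cons_append, List.cons.injEq] at h
      obtain ⟨rfl, h2⟩ := h
      rcases ih a r₁ l₂' b r₂ h2 with ⟨rfl, rfl, rfl⟩ | ⟨m, hm1, hm2⟩ | ⟨m, hm1, hm2⟩
      · exact Or.inl ⟨rfl, rfl, rfl⟩
      · exact Or.inr (Or.inl ⟨m, by rw [hm1, List.cons_append], hm2⟩)
      · exact Or.inr (Or.inr ⟨m, by rw [hm1, List.cons_append], hm2⟩)

theorem rewAt_rule {s t u : Trm F V} {b : Bool} (h : RewAt R s t u b) :
    ∃ v, (u, v) ∈ R ∧ ∀ (R' : Set (Trm F V × Trm F V)), (u, v) ∈ R' → RewAt R' s t u b := by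
  induction h with
  | root h => exact ⟨_, h, fun R' h' => .root h'⟩
  | congr h ih => obtain ⟨v, hv, hall⟩ := ih; exact ⟨v, hv, fun R' h' => .congr (hall R' h')⟩

theorem rewAt_size {s t u : Trm F V} {b : Bool} (h : RewAt R s t u b) :
    sizeOf u ≤ sizeOf s ∧ (b = false → sizeOf u < sizeOf s) := by
  induction h with
  | root h => exact ⟨le_refl _, by simp⟩
  | @congr t t' u b f l r h ih =>
    have h2 : t ∈ l ++ t :: r := by simp
    have h1 := List.sizeOf_lt_of_mem h2
    simp only [Trm.app.sizeOf_spec]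
    omega

theorem rewAt_app_inv {f : F} {ts : List (Trm F V)} {t₂ u₂ : Trm F V} {b₂ : Bool}
    (h : RewAt R (Trm.app f ts) t₂ u₂ b₂) :
    (b₂ = true ∧ (Trm.app f ts, t₂) ∈ R ∧ u₂ = Trm.app f ts) ∨
    (b₂ = false ∧ ∃ l a a' r b', ts = l ++ a :: r ∧ t₂ = Trm.app f (l ++ a' :: r) ∧
      RewAt R a a' u₂ b') := by
  cases h with
  | root h => exact Or.inl ⟨rfl, h, rfl⟩
  | @congr a a' u b f l r h => exact Or.inr ⟨rfl, l, a, a', r, b, rfl, rfl, h⟩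

/-- A rewrite step strictly inside the lhs of a rule contradicts left-reducedness. -/
theorem no_inner_step (hL : LeftReduced R) {f : F} {l r : List (Trm F V)} {a a' u v : Trm F V}
    {b : Bool} (hmem : (Trm.app f (l ++ a :: r), v) ∈ R) (h : RewAt R a a' u b) : False := by
  obtain ⟨v₁, hv₁, hall⟩ := rewAt_rule h
  have hsz : sizeOf u ≤ sizeOf a := (rewAt_size h).1
  have hlt := List.sizeOf_lt_of_mem (show a ∈ l ++ a :: r by simp)
  have hne : (u, v₁) ≠ (Trm.app f (l ++ a :: r), v) := by
    intro he
    have := congrArg (fun p => sizeOf p.1) he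
    simp only [Trm.app.sizeOf_spec] at this
    omega
  exact hL _ hmem _ ⟨u, false, RewAt.congr (hall _ ⟨hv₁, hne⟩)⟩

theorem rewAt_diamond (hL : LeftReduced R) :
    ∀ {s t₁ u₁ : Trm F V} {b₁ : Bool} {t₂ u₂ : Trm F V} {b₂ : Bool},
    RewAt R s t₁ u₁ b₁ → RewAt R s t₂ u₂ b₂ →
    (t₁ = t₂ ∧ u₁ = u₂ ∧ b₁ = b₂) ∨
    (b₁ = false ∧ b₂ = false ∧ ∃ w, RewAt R t₁ w u₂ false ∧ RewAt R t₂ w u₁ false) := by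
  intro s t₁ u₁ b₁ t₂ u₂ b₂ h₁ h₂
  induction h₁ generalizing t₂ u₂ b₂ with
  | @root u v h =>
    cases h₂ with
    | root h' =>
      by_cases hv : v = t₂
      · exact Or.inl ⟨hv, rfl, rfl⟩
      · exfalso
        have hmem : (u, t₂) ∈ R \ {(u, v)} := ⟨h', by simp [Ne.symm hv, Prod.ext_iff]⟩
        exact hL _ h _ ⟨u, true, RewAt.root hmem⟩
    | congr h' => exact absurd h' (fun h' => no_inner_step hL h h')
  | @congr a a' u₁' b₁' f l r h₁' ih =>
    rcases rewAt_app_inv h₂ with ⟨hb₂, hmem, hu₂⟩ | ⟨hb₂, l₂, a₂, a₂', r₂, b₂', hts, ht₂, h₂'⟩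
    · exact absurd h₁' (fun h₁' => no_inner_step hL hmem h₁')
    · subst hb₂ ht₂
      rcases list_split l a r l₂ a₂ r₂ hts with ⟨rfl, rfl, rfl⟩ | ⟨m, hm1, hm2⟩ | ⟨m, hm1, hm2⟩
      · rcases ih h₂' with ⟨rfl, rfl, rfl⟩ | ⟨hb1, hb2, w, hw₁, hw₂⟩
        · exact Or.inl ⟨rfl, rfl, rfl⟩
        · exact Or.inr ⟨rfl, rfl, Trm.app f (l ++ w :: r), RewAt.congr hw₁, RewAt.congr hw₂⟩
      · subst hm1 hm2
        refine Or.inr ⟨rfl, rfl, Trm.app f (l ++ a' :: (m ++ a₂' :: r₂)), ?_, ?_⟩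
        · have := RewAt.congr (f := f) (l := l ++ a' :: m) (r := r₂) h₂'
          simpa using this
        · have := RewAt.congr (f := f) (l := l) (r := m ++ a₂' :: r₂) h₁'
          simpa using this
      · subst hm1 hm2
        refine Or.inr ⟨rfl, rfl, Trm.app f (l₂ ++ a₂' :: (m ++ a' :: r)), ?_, ?_⟩
        · have := RewAt.congr (f := f) (l := l₂) (r := m ++ a' :: r) h₂'
          simpa using this
        · have := RewAt.congr (f := f) (l := l₂ ++ a₂' :: m) (r := r) h₁'
          simpa using this
end Rewriting
section NFLemmas
variable {F V : Type} {O : ReductionOrdering F V} {R : Set (Trm F V × Trm F V)}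

theorem step_gt (hR : GoodRS O R) {s t : Trm F V} (h : Step R s t) : O.gt s t := by
  obtain ⟨u, b, h⟩ := h
  induction h with
  | root h => exact (hR.2 _ h).2.2
  | congr h ih => exact O.compat_ctx _ _ _ ih

theorem not_irred_iff {t : Trm F V} : ¬ Irred R t ↔ ∃ t', Step R t t' := by
  unfold Irred; push_neg; rfl

theorem exists_reachNF (hR : GoodRS O R) : ∀ t : Trm F V, ∃ n, ReachNF R t n := by
  intro t
  induction t using WellFounded.induction O.wf with
  | _ t ih =>
    by_cases h : Irred R t
    · exact ⟨t, Relation.ReflTransGen.refl, h⟩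
    · obtain ⟨t', ht'⟩ := not_irred_iff.1 h
      obtain ⟨n, h1, h2⟩ := ih t' (step_gt hR ht')
      exact ⟨n, Relation.ReflTransGen.head ht' h1, h2⟩

theorem step_diamond (hR : GoodRS O R) {s t₁ t₂ : Trm F V} (h₁ : Step R s t₁)
    (h₂ : Step R s t₂) : t₁ = t₂ ∨ ∃ w, Step R t₁ w ∧ Step R t₂ w := by
  obtain ⟨u₁, b₁, h₁⟩ := h₁; obtain ⟨u₂, b₂, h₂⟩ := h₂
  rcases rewAt_diamond hR.1 h₁ h₂ with ⟨he, -, -⟩ | ⟨-, -, w, hw₁, hw₂⟩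
  · exact Or.inl he
  · exact Or.inr ⟨w, ⟨_, _, hw₁⟩, ⟨_, _, hw₂⟩⟩

theorem rtg_irred {n d : Trm F V} (h : Relation.ReflTransGen (Step R) n d) (hn : Irred R n) :
    n = d := by
  rcases Relation.ReflTransGen.cases_head h with rfl | ⟨c, hc, -⟩
  · rfl
  · exact absurd hc (hn _)

theorem reachNF_unique (hR : GoodRS O R) {t n₁ n₂ : Trm F V} (h₁ : ReachNF R t n₁)
    (h₂ : ReachNF R t n₂) : n₁ = n₂ := by
  have hcr : ∀ a b c : Trm F V, Step R a b → Step R a c →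
      ∃ d, Relation.ReflGen (Step R) b d ∧ Relation.ReflTransGen (Step R) c d := by
    intro a b c hab hac
    rcases step_diamond hR hab hac with rfl | ⟨w, hw₁, hw₂⟩
    · exact ⟨b, Relation.ReflGen.refl, Relation.ReflTransGen.refl⟩
    · exact ⟨w, Relation.ReflGen.single hw₁, Relation.ReflTransGen.single hw₂⟩
  obtain ⟨d, hd₁, hd₂⟩ := Relation.church_rosser hcr h₁.1 h₂.1
  rw [rtg_irred hd₁ h₁.2, rtg_irred hd₂ h₂.2]

theorem nf_spec (hR : GoodRS O R) (t : Trm F V) : ReachNF R t (nf R t) := by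
  unfold nf
  rw [dif_pos (exists_reachNF hR t)]
  exact (exists_reachNF hR t).choose_spec

theorem nf_eq_of_steps (hR : GoodRS O R) {a b : Trm F V}
    (h : Relation.ReflTransGen (Step R) a b) : nf R a = nf R b := by
  have ha := nf_spec hR a
  have hb := nf_spec hR b
  exact reachNF_unique hR ha ⟨h.trans hb.1, hb.2⟩

end NFLemmas
section RMLemmas
variable {F V : Type} {O : ReductionOrdering F V} {R : Set (Trm F V × Trm F V)}

/-- The label of a redex collected at a step with root-flag `b` and label budget `m`. -/
def lab (m : ℕ) (b : Bool) : ℕ := if b then m else max m 1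

theorem RM.mk' {t t' u : Trm F V} {b : Bool} {m : ℕ} {S : Multiset (Trm F V × ℕ)}
    (h : RewAt R t t' u b) (hS : RM R t' m S) : RM R t m ((u, lab m b) ::ₘ S) := by
  cases b with
  | true => simpa [lab] using RM.step_top h (Or.inl rfl) hS
  | false =>
    rcases Nat.eq_zero_or_pos m with rfl | hm
    · simpa [lab] using RM.step_deep h hS
    · have : lab m false = m := by simp [lab]; omega
      rw [this]
      exact RM.step_top h (Or.inr hm) hS

theorem RM.inv {t : Trm F V} {m : ℕ} {S : Multiset (Trm F V × ℕ)} (h : RM R t m S) :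
    (Irred R t ∧ S = 0) ∨
    ∃ t' u b S', RewAt R t t' u b ∧ RM R t' m S' ∧ S = (u, lab m b) ::ₘ S' := by
  cases h with
  | irred h => exact Or.inl ⟨h, rfl⟩
  | @step_top t t' u b m S h hc hS =>
    refine Or.inr ⟨t', u, b, S, h, hS, ?_⟩
    congr 1
    cases b with
    | true => simp [lab]
    | false =>
      have hm : 0 < m := by
        rcases hc with hc | hc
        · exact absurd hc (by simp)
        · exact hc
      simp [lab]; omega
  | @step_deep t t' u S h hS =>
    exact Or.inr ⟨t', u, false, S, h, hS, by simp [lab]⟩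

theorem rm_exists (hR : GoodRS O R) : ∀ (t : Trm F V) (m : ℕ), ∃ S, RM R t m S := by
  intro t
  induction t using WellFounded.induction O.wf with
  | _ t ih =>
    intro m
    by_cases h : Irred R t
    · exact ⟨0, .irred h⟩
    · obtain ⟨t', u, b, hAt⟩ := not_irred_iff.1 h
      obtain ⟨S, hS⟩ := ih t' (step_gt hR ⟨u, b, hAt⟩) m
      exact ⟨_, RM.mk' hAt hS⟩

theorem rm_unique (hR : GoodRS O R) : ∀ (t : Trm F V) (m : ℕ)
    (S₁ S₂ : Multiset (Trm F V × ℕ)), RM R t m S₁ → RM R t m S₂ → S₁ = S₂ := by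
  intro t
  induction t using WellFounded.induction O.wf with
  | _ t ih =>
    intro m S₁ S₂ h₁ h₂
    rcases RM.inv h₁ with ⟨hi₁, rfl⟩ | ⟨t₁, u₁, b₁, S₁', hAt₁, hS₁, rfl⟩ <;>
      rcases RM.inv h₂ with ⟨hi₂, rfl⟩ | ⟨t₂, u₂, b₂, S₂', hAt₂, hS₂, rfl⟩
    · rfl
    · exact absurd ⟨u₂, b₂, hAt₂⟩ (hi₁ _)
    · exact absurd ⟨u₁, b₁, hAt₁⟩ (hi₂ _)
    · rcases rewAt_diamond hR.1 hAt₁ hAt₂ with ⟨rfl, rfl, rfl⟩ | ⟨hb₁, hb₂, w, hw₁, hw₂⟩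
      · rw [ih t₁ (step_gt hR ⟨_, _, hAt₁⟩) m S₁' S₂' hS₁ hS₂]
      · subst hb₁ hb₂
        obtain ⟨S₃, hS₃⟩ := rm_exists hR w m
        have e₁ : S₁' = (u₂, lab m false) ::ₘ S₃ :=
          ih t₁ (step_gt hR ⟨_, _, hAt₁⟩) m _ _ hS₁ (RM.mk' hw₁ hS₃)
        have e₂ : S₂' = (u₁, lab m false) ::ₘ S₃ :=
          ih t₂ (step_gt hR ⟨_, _, hAt₂⟩) m _ _ hS₂ (RM.mk' hw₂ hS₃)
        rw [e₁, e₂, Multiset.cons_swap]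

theorem rm_spec (hR : GoodRS O R) (t : Trm F V) (m : ℕ) : RM R t m (rm R t m) := by
  unfold rm
  rw [dif_pos (rm_exists hR t m)]
  exact (rm_exists hR t m).choose_spec

theorem rm_eq (hR : GoodRS O R) {t : Trm F V} {m : ℕ} {S : Multiset (Trm F V × ℕ)}
    (h : RM R t m S) : rm R t m = S :=
  rm_unique hR t m _ _ (rm_spec hR t m) h

theorem rm_step (hR : GoodRS O R) {s s' u : Trm F V} {b : Bool} (h : RewAt R s s' u b) (m : ℕ) :
    rm R s m = (u, lab m b) ::ₘ rm R s' m :=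
  rm_eq hR (RM.mk' h (rm_spec hR s' m))

end RMLemmas
section SubstLemmas
variable {F V : Type} {R : Set (Trm F V × Trm F V)}

theorem step_congr {a a' : Trm F V} (f : F) (l r : List (Trm F V)) (h : Step R a a') :
    Step R (Trm.app f (l ++ a :: r)) (Trm.app f (l ++ a' :: r)) := by
  obtain ⟨u, b, h⟩ := h
  exact ⟨u, false, RewAt.congr h⟩

theorem rtg_congr {a a' : Trm F V} (f : F) (l r : List (Trm F V))
    (h : Relation.ReflTransGen (Step R) a a') :
    Relation.ReflTransGen (Step R) (Trm.app f (l ++ a :: r)) (Trm.app f (l ++ a' :: r)) :=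
  Relation.ReflTransGen.lift (fun t => Trm.app f (l ++ t :: r))
    (fun _ _ h => step_congr f l r h) _ _ h

theorem rtg_app_list (f : F) (fa fb : Trm F V → Trm F V) :
    ∀ (ts : List (Trm F V)), (∀ t ∈ ts, Relation.ReflTransGen (Step R) (fa t) (fb t)) →
    ∀ (pre : List (Trm F V)),
      Relation.ReflTransGen (Step R) (Trm.app f (pre ++ ts.map fa))
        (Trm.app f (pre ++ ts.map fb)) := by
  intro ts
  induction ts with
  | nil => intro _ pre; simp; exact Relation.ReflTransGen.refl
  | cons t ts' ih =>
    intro h pre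
    have h1 : Relation.ReflTransGen (Step R) (Trm.app f (pre ++ fa t :: ts'.map fa))
        (Trm.app f (pre ++ fb t :: ts'.map fa)) := rtg_congr f pre _ (h t (by simp))
    have h2 := ih (fun t ht => h t (by simp [ht])) (pre ++ [fb t])
    simp only [List.append_assoc, List.singleton_append] at h2
    simpa using h1.trans h2

theorem subst_rtg {θ θ' : V → Trm F V}
    (h : ∀ y, Relation.ReflTransGen (Step R) (θ y) (θ' y)) (s : Trm F V) :
    Relation.ReflTransGen (Step R) (s.subst θ) (s.subst θ') := by
  induction s using Trm.ind with
  | hv x => simpa [Trm.subst_var] using h x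
  | ha f ts ih =>
    rw [Trm.subst_app, Trm.subst_app]
    simpa using rtg_app_list f _ _ ts ih []

theorem update_rtg {θ : V → Trm F V} {x : V} {w : Trm F V} (h : Step R (θ x) w) (y : V) :
    Relation.ReflTransGen (Step R) (θ y) (Function.update θ x w y) := by
  rcases eq_or_ne y x with rfl | hy
  · rw [Function.update_self]; exact Relation.ReflTransGen.single h
  · rw [Function.update_of_ne hy]

theorem fill_rewAt {v v' : Trm F V} (h : (v, v') ∈ R) :
    ∀ u : Ctx F V, ∃ b, RewAt R (u.fill v) (u.fill v') v b := by
  intro u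
  induction u with
  | hole => exact ⟨true, RewAt.root h⟩
  | app f l c r ih => obtain ⟨b, hb⟩ := ih; exact ⟨false, RewAt.congr hb⟩

theorem isGround_inv {f : F} {ts : List (Trm F V)} (h : Trm.IsGround (Trm.app f ts)) :
    ∀ t ∈ ts, Trm.IsGround t := by cases h with | app h => exact h

theorem isGround_subst {θ θ' : V → Trm F V}
    (hval : ∀ y, Trm.IsGround (θ' y) ∨ θ' y = θ y) :
    ∀ s : Trm F V, Trm.IsGround (s.subst θ) → Trm.IsGround (s.subst θ') := by
  intro s
  induction s using Trm.ind with
  | hv x =>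
    rw [Trm.subst_var, Trm.subst_var]
    rcases hval x with h | h
    · exact fun _ => h
    · rw [h]; exact id
  | ha f ts ih =>
    rw [Trm.subst_app, Trm.subst_app]
    intro h
    refine Trm.IsGround.app ?_
    intro t ht
    obtain ⟨t0, ht0, rfl⟩ := List.mem_map.1 ht
    exact ih t0 ht0 (isGround_inv h _ (List.mem_map_of_mem ht0))

theorem fill_ground {s s' : Trm F V} (hs' : Trm.IsGround s') :
    ∀ u : Ctx F V, Trm.IsGround (u.fill s) → Trm.IsGround (u.fill s') := by
  intro u
  induction u with
  | hole => exact fun _ => hs'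
  | app f l c r ih =>
    intro h
    refine Trm.IsGround.app ?_
    intro t ht
    rcases List.mem_append.1 ht with ht | ht
    · exact isGround_inv h _ (by simp [Ctx.fill, ht])
    · rcases List.mem_cons.1 ht with rfl | ht
      · exact ih (isGround_inv h _ (by simp [Ctx.fill]))
      · exact isGround_inv h _ (by simp [Ctx.fill, ht])

theorem subterms_app {f : F} {ts : List (Trm F V)} :
    (Trm.app f ts).subterms
      = insert (Trm.app f ts) ((ts.map Trm.subterms).foldr (· ∪ ·) ∅) := by
  rw [Trm.subterms]
  congr 1
  congr 1
  exact List.attach_map_val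

theorem psubterms_app {f : F} {ts : List (Trm F V)} :
    (Trm.app f ts).psubterms = (ts.map Trm.subterms).foldr (· ∪ ·) ∅ := by
  rw [Trm.psubterms]

theorem mem_foldr_union {a : Trm F V} :
    ∀ L : List (Finset (Trm F V)), a ∈ L.foldr (· ∪ ·) ∅ ↔ ∃ X ∈ L, a ∈ X := by
  intro L
  induction L with
  | nil => simp
  | cons X L ih => simp [ih]

theorem subterms_eq {t : Trm F V} : t.subterms = insert t t.psubterms := by
  cases t with
  | var x => simp [Trm.subterms, Trm.psubterms]
  | app f ts => rw [subterms_app, psubterms_app]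

theorem ground_of_var_subterm {θ : V → Trm F V} {x : V} :
    ∀ s : Trm F V, Trm.var x ∈ s.subterms → Trm.IsGround (s.subst θ) → Trm.IsGround (θ x) := by
  intro s
  induction s using Trm.ind with
  | hv y =>
    simp only [Trm.subterms, Finset.mem_singleton]
    intro h
    cases h
    rw [Trm.subst_var]
    exact id
  | ha f ts ih =>
    rw [subterms_app]
    intro hmem hg
    rcases Finset.mem_insert.1 hmem with h | h
    · cases h
    · obtain ⟨X, hX, haX⟩ := (mem_foldr_union _).1 h
      obtain ⟨t0, ht0, rfl⟩ := List.mem_map.1 hX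
      refine ih t0 ht0 haX ?_
      rw [Trm.subst_app] at hg
      exact isGround_inv hg _ (List.mem_map_of_mem ht0)

end SubstLemmas
section NMLemmas
variable {F V : Type} {O : ReductionOrdering F V} {R : Set (Trm F V × Trm F V)}

theorem exists_lss_var {C : Clause F V} {x : V} (h : Trm.var x ∈ allSub C) :
    ∃ m, (Trm.var x, m) ∈ lss C := by
  classical
  by_cases h2 : Trm.var x ∈ ssN C
  · exact ⟨2, by simp [lss, Finset.mem_union, h2]⟩
  by_cases h1 : Trm.var x ∈ ssPp C
  · refine ⟨1, ?_⟩
    simp only [lss, Finset.mem_union, Finset.mem_image, Finset.mem_sdiff]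
    exact Or.inl (Or.inr ⟨Trm.var x, ⟨h1, h2⟩, rfl⟩)
  · refine ⟨0, ?_⟩
    have h0 : Trm.var x ∈ tsP C := by
      obtain ⟨L, hL, hmem⟩ := Finset.mem_sup.1 h
      cases L with
      | neg s s' =>
        exfalso
        exact h2 (Finset.mem_sup.2 ⟨Lit.neg s s', hL, hmem⟩)
      | pos s s' =>
        have hsub : Trm.var x ∈ s.subterms ∪ s'.subterms := hmem
        have hps : Trm.var x ∉ (Lit.pos s s').posPSubs := by
          intro hc
          exact h1 (Finset.mem_sup.2 ⟨Lit.pos s s', hL, hc⟩)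
        refine Finset.mem_sup.2 ⟨Lit.pos s s', hL, ?_⟩
        show Trm.var x ∈ ({s, s'} : Finset (Trm F V))
        rcases Finset.mem_union.1 hsub with hs | hs <;> rw [subterms_eq] at hs <;>
          rcases Finset.mem_insert.1 hs with he | hps' <;> try (subst he; simp)
        · exact absurd (Finset.mem_union.2 (Or.inl hps')) hps
        · exact absurd (Finset.mem_union.2 (Or.inr hps')) hps
    simp only [lss, Finset.mem_union, Finset.mem_image, Finset.mem_sdiff]
    exact Or.inr ⟨Trm.var x, ⟨h0, by simp [h1, h2]⟩, rfl⟩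

theorem nm_step (hR : GoodRS O R) {θ : V → Trm F V} {x : V} {w u₀ : Trm F V} {b : Bool}
    (hAt : RewAt R (θ x) w u₀ b) {C : Clause F V} (hx : ∃ m, (Trm.var x, m) ∈ lss C) :
    MultGT (lexGT O) (nm R C θ) (nm R C (Function.update θ x w)) := by
  classical
  set θ' := Function.update θ x w with hθ'
  have hstep : Step R (θ x) w := ⟨u₀, b, hAt⟩
  have hrtg : ∀ y, Relation.ReflTransGen (Step R) (θ y) (θ' y) := update_rtg hstep
  have hnf : ∀ s : Trm F V, nf R (s.subst θ) = nf R (s.subst θ') :=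
    fun s => nf_eq_of_steps hR (subst_rtg hrtg s)
  have hθ'x : θ' x = w := Function.update_self x w θ
  have hpoint : ∀ p ∈ lss C, ∃ Ep, nmElt R θ p = Ep + nmElt R θ' p := by
    rintro ⟨u, m⟩ _
    cases u with
    | var y =>
      rcases eq_or_ne y x with rfl | hy
      · refine ⟨{(u₀, lab m b)}, ?_⟩
        show rm R (θ y) m = _ + rm R (θ' y) m
        rw [hθ'x, rm_step hR hAt m, Multiset.singleton_add]
      · refine ⟨0, ?_⟩
        show rm R (θ y) m = 0 + rm R (θ' y) m
        rw [hθ', Function.update_of_ne hy, zero_add]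
    | app g ts =>
      refine ⟨0, ?_⟩
      show rm R (Trm.app g (ts.map fun t => nf R (t.subst θ))) m = 0 + _
      rw [zero_add]
      congr 2
      exact List.map_congr_left fun t _ => hnf t
  have hsum : (lss C).sum (nmElt R θ)
      = (lss C).sum (fun p => nmElt R θ p - nmElt R θ' p) + (lss C).sum (nmElt R θ') := by
    rw [← Finset.sum_add_distrib]
    refine Finset.sum_congr rfl ?_
    intro p hp
    obtain ⟨Ep, hEp⟩ := hpoint p hp
    rw [hEp, add_tsub_cancel_right]
  have hlts : ((lts C).sum fun p => ({(nf R (p.1.subst θ), p.2)} : Multiset (Trm F V × ℕ)))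
      = (lts C).sum fun p => {(nf R (p.1.subst θ'), p.2)} :=
    Finset.sum_congr rfl fun p _ => by rw [hnf]
  have hE : (lss C).sum (fun p => nmElt R θ p - nmElt R θ' p) ≠ 0 := by
    obtain ⟨m₀, hm₀⟩ := hx
    have hval : nmElt R θ (Trm.var x, m₀) - nmElt R θ' (Trm.var x, m₀)
        = {(u₀, lab m₀ b)} := by
      show rm R (θ x) m₀ - rm R (θ' x) m₀ = _
      rw [hθ'x, rm_step hR hAt m₀, ← Multiset.singleton_add, add_tsub_cancel_right]
    intro hc
    have hle := Finset.single_le_sum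
      (f := fun p => nmElt R θ p - nmElt R θ' p) (fun p _ => Multiset.zero_le _) hm₀
    rw [hc, Multiset.le_zero] at hle
    have hle' : nmElt R θ (Trm.var x, m₀) - nmElt R θ' (Trm.var x, m₀) = 0 := hle
    rw [hval] at hle'
    simp at hle'
  have : nm R C θ = nm R C θ' + (lss C).sum (fun p => nmElt R θ p - nmElt R θ' p) := by
    unfold nm
    rw [hsum, hlts]
    abel
  rw [this]
  exact multGT_of_add hE

end NMLemmas
section FactorLemmas
variable {F V : Type}

theorem Trm.subst_factor {σ θ : V → Trm F V} (hfac : ∀ y, (σ y).subst θ = θ y) (t : Trm F V) :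
    (t.subst σ).subst θ = t.subst θ := by
  rw [Trm.subst_subst]
  have h : (fun x => (σ x).subst θ) = θ := funext hfac
  rw [h]

theorem Lit.subst_factor {σ θ : V → Trm F V} (hfac : ∀ y, (σ y).subst θ = θ y) (L : Lit F V) :
    (L.subst σ).subst θ = L.subst θ := by
  cases L <;> simp [Lit.subst, Trm.subst_factor hfac]

theorem Clause.subst_factor {σ θ : V → Trm F V} (hfac : ∀ y, (σ y).subst θ = θ y)
    (C : Clause F V) : Clause.subst θ (Clause.subst σ C) = Clause.subst θ C := by
  unfold Clause.subst
  rw [Multiset.map_map]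
  exact Multiset.map_congr rfl fun L _ => Lit.subst_factor hfac L

theorem lit_ground_sides {θ : V → Trm F V} {C : Clause F V} (hg : Clause.IsGround (Clause.subst θ C))
    {L : Lit F V} (hL : L ∈ C) : Lit.IsGround (L.subst θ) :=
  hg _ (Multiset.mem_map_of_mem _ hL)

end FactorLemmas

/-- Lemma 12: every inference of the Ground Closure Horn Superposition
Calculus whose premises lie in `G(N)` is either a ground instance of an inference of
the non-ground Horn Superposition Calculus with Parallel Superposition from clauses
of `N`, or is contained in `Red_I(G(N))`. -/
theorem lifting {F V : Type} (O : ReductionOrdering F V) (T : TieBreak F V)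
    (N : Set (Clause F V)) (hhorn : ∀ C ∈ N, IsHorn C) :
    ∀ ι : GInf F V, ι.IsInf O → (∀ p ∈ ι.prems, p ∈ GClosures N) →
      IsGroundInstOfNG O ι ∨ RedI O T (GClosures N) ι := by
  intro ι hinf hprems
  cases ι with
  | eqres C' s s' σ θ =>
    left
    obtain ⟨hg, heq, hmgu, hmax⟩ := hinf
    have hfac : ∀ y, (σ y).subst θ = θ y := hmgu.2 θ heq
    refine ⟨hmgu, ?_⟩
    intro L' hL' hgt
    obtain ⟨L₀, hL₀, rfl⟩ := Multiset.mem_map.1 hL'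
    have h2 := litGT_subst O (τ := θ) hgt
    rw [Lit.subst_factor hfac, Lit.subst_factor hfac] at h2
    exact hmax (L₀.subst θ) (Multiset.mem_map_of_mem _ hL₀) h2
  | ps1 D' t t' C u σ θ =>
    left
    obtain ⟨hgD, hgC, hnotvar, heq, hmgu, humem, ha, hb, hc, hd⟩ := hinf
    have hfac : ∀ y, (σ y).subst θ = θ y := hmgu.2 θ heq
    have smax_lift : ∀ (L : Lit F V) (D : Clause F V),
        SMaxIn O (Lit.subst θ L) (Clause.subst θ D) →
        SMaxIn O (Lit.subst σ L) (Clause.subst σ D) := by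
      intro L D hsmax L' hL'
      obtain ⟨L₀, hL₀, rfl⟩ := Multiset.mem_map.1 hL'
      constructor
      · intro hgt'
        have h2 := litGT_subst O (τ := θ) hgt'
        rw [Lit.subst_factor hfac, Lit.subst_factor hfac] at h2
        exact (hsmax _ (Multiset.mem_map_of_mem _ hL₀)).1 h2
      · intro heq'
        have h2 : Lit.subst θ L₀ = Lit.subst θ L := by
          rw [← Lit.subst_factor hfac L₀, heq', Lit.subst_factor hfac]
        exact (hsmax _ (Multiset.mem_map_of_mem _ hL₀)).2 h2
    have gt_lift : ∀ a b : Trm F V, O.gt (a.subst θ) (b.subst θ) →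
        ¬ (O.gt (b.subst σ) (a.subst σ) ∨ a.subst σ = b.subst σ) := by
      rintro a b hgt (hgt' | heq')
      · have h2 := O.compat_subst θ hgt'
        rw [Trm.subst_factor hfac, Trm.subst_factor hfac] at h2
        exact Ogt_asymm O hgt h2
      · have h2 : a.subst θ = b.subst θ := by
          rw [← Trm.subst_factor hfac a, heq', Trm.subst_factor hfac]
        rw [h2] at hgt
        exact Ogt_irrefl O _ hgt
    refine ⟨hnotvar, hmgu, humem, ?_, ?_, ?_, ?_⟩
    · rintro hu (hgt' | heq')
      · have haθ := ha hu
        have h2 := clauseGT_subst O (τ := θ) hgt'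
        rw [Clause.subst_factor hfac, Clause.subst_factor hfac] at h2
        exact clauseGT_asymm O haθ h2
      · have haθ := ha hu
        have h2 : Clause.subst θ C = Clause.subst θ (D' + {Lit.pos t t'}) := by
          rw [← Clause.subst_factor hfac C, heq', Clause.subst_factor hfac]
        rw [h2] at haθ
        exact clauseGT_irrefl O _ haθ
    · obtain ⟨s₁, s₂, hcase⟩ := hb
      refine ⟨s₁, s₂, ?_⟩
      rcases hcase with ⟨hmem, husub, hgt, hsmax⟩ | ⟨hmem, husub, hgt, hmax⟩
      · exact Or.inl ⟨hmem, husub, gt_lift s₁ s₂ hgt, smax_lift _ _ hsmax⟩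
      · refine Or.inr ⟨hmem, husub, gt_lift s₁ s₂ hgt, ?_⟩
        intro L' hL' hgt'
        obtain ⟨L₀, hL₀, rfl⟩ := Multiset.mem_map.1 hL'
        have h2 := litGT_subst O (τ := θ) hgt'
        rw [Lit.subst_factor hfac, Lit.subst_factor hfac] at h2
        exact hmax _ (Multiset.mem_map_of_mem _ hL₀) h2
    · exact smax_lift _ _ hc
    · exact gt_lift t t' hd
  | ps2 D' t t' C x u θ =>
    right
    obtain ⟨hgD, hgC, hxmem, hxval, hside⟩ := hinf
    intro R hR
    by_cases hrule : (t.subst θ, t'.subst θ) ∈ R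
    · set w : Trm F V := u.fill (t'.subst θ) with hw
      set θ' : V → Trm F V := Function.update θ x w with hθ'
      obtain ⟨b, hAt⟩ := fill_rewAt hrule u
      rw [← hxval] at hAt
      by_cases hmod : Models R (C, θ')
      · left
        obtain ⟨L, hL, hLt⟩ := hmod
        refine ⟨L, ?_, hLt⟩
        show L ∈ Clause.subst θ' (D' + C)
        unfold Clause.subst
        rw [Multiset.map_add]
        exact Multiset.mem_add.2 (Or.inr hL)
      · right; left
        have hCN : C ∈ N := (hprems (C, θ) (by simp [GInf.prems])).1
        have hgt' : Trm.IsGround (t'.subst θ) := by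
          have := lit_ground_sides hgD (L := Lit.pos t t') (by simp)
          exact this.2
        have hgx : Trm.IsGround (θ x) := by
          obtain ⟨L, hL, hmem⟩ := Finset.mem_sup.1 hxmem
          have hLg := lit_ground_sides hgC (Multiset.mem_toFinset.1 hL)
          cases L with
          | pos s₁ s₂ =>
            rcases Finset.mem_union.1 hmem with hs | hs
            · exact ground_of_var_subterm _ hs hLg.1
            · exact ground_of_var_subterm _ hs hLg.2
          | neg s₁ s₂ =>
            rcases Finset.mem_union.1 hmem with hs | hs
            · exact ground_of_var_subterm _ hs hLg.1
            · exact ground_of_var_subterm _ hs hLg.2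
        have hgw : Trm.IsGround w := by
          rw [hw]
          refine fill_ground (s := t.subst θ) hgt' u ?_
          rw [← hxval]
          exact hgx
        have hval : ∀ y, Trm.IsGround (θ' y) ∨ θ' y = θ y := by
          intro y
          rcases eq_or_ne y x with rfl | hy
          · left; rw [hθ', Function.update_self]; exact hgw
          · right; rw [hθ', Function.update_of_ne hy]
        have hground : Closure.IsGround (C, θ') := by
          intro L hL
          obtain ⟨L₀, hL₀, rfl⟩ := Multiset.mem_map.1 hL
          have hLg := lit_ground_sides hgC hL₀
          cases L₀ with
          | pos s₁ s₂ => exact ⟨isGround_subst hval s₁ hLg.1, isGround_subst hval s₂ hLg.2⟩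
          | neg s₁ s₂ => exact ⟨isGround_subst hval s₁ hLg.1, isGround_subst hval s₂ hLg.2⟩
        refine ⟨(C, θ'), ⟨hCN, hground⟩, ?_, hmod⟩
        left
        exact nm_step hR hAt (exists_lss_var hxmem)
    · right; right; left
      exact ⟨hside.2.2.2, hrule⟩
end
end
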